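/- arXiv:2501.11277 — 6 statements merged into one kernel-verified Lean document; each statement's English description precedes it below -/
import Mathlib

section
/- Let p be a prime, F a perfect field of characteristic ≠ p, S a subset of F, and F' a Galois extension of F containing all p-power roots of unity. Set G = Gal(F'(S^{1/p^∞})/F) and H = Gal(F'(S^{1/p^∞})/F'). Then for all σ ∈ G and τ ∈ H, one has σ τ σ^{-1} = τ^{χ_p(σ)}, where χ_p is the p-adic cyclotomic character and the exponentiation by the p-adic integer χ_p(σ) is well-defined since H is an abelian pro-p group. -/
/-- Let `p` be a prime, `F` a perfect field of characteristic `≠ p`,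
`S ⊆ F`, and `F'` a Galois extension of `F` containing all `p`-power roots of unity.
For `σ ∈ G = Gal(F'(S^{1/p^∞})/F)` and `τ ∈ H = Gal(F'(S^{1/p^∞})/F')` one has
`σ τ σ⁻¹ = τ^{χ_p(σ)}`.  Concretely (working with automorphisms of the algebraic
closure, which restrict to the relevant extension): if `σ` acts on `p^n`-th roots of
unity by `ζ ↦ ζ^a` (i.e. `a ≡ χ_p(σ) mod p^n`), then for every `x` with `x^{p^n} ∈ S`
one has `(σ τ σ⁻¹)(x) = (τ^a)(x)`. -/
theorem stmt2 (p : ℕ) (hp : p.Prime) (F : Type) [Field F] [PerfectField F]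
    (hchar : ringChar F ≠ p) (S : Set F)
    (F' : IntermediateField F (AlgebraicClosure F)) (hGal : IsGalois F ↥F')
    (hroots : ∀ (ζ : AlgebraicClosure F) (m : ℕ), ζ ^ p ^ m = 1 → ζ ∈ F')
    (σ τ : AlgebraicClosure F ≃ₐ[F] AlgebraicClosure F)
    (hτ : ∀ y : AlgebraicClosure F, y ∈ F' → τ y = y)
    (n : ℕ) (a : ℕ)
    (hσ : ∀ ζ : AlgebraicClosure F, ζ ^ p ^ n = 1 → σ ζ = ζ ^ a)
    (x : AlgebraicClosure F) (hx : ∃ s ∈ S, x ^ p ^ n = algebraMap F (AlgebraicClosure F) s) :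
    (σ * τ * σ⁻¹) x = (τ ^ a) x := by
  obtain ⟨s, hs, hxs⟩ := hx
  have hfix : ∀ (g : AlgebraicClosure F ≃ₐ[F] AlgebraicClosure F),
      g (x ^ p ^ n) = x ^ p ^ n := by
    intro g; rw [hxs, g.commutes]
  by_cases hx0 : x = 0
  · subst hx0; simp
  set ζ : AlgebraicClosure F := τ x * x⁻¹ with hζdef
  have hζpow : ζ ^ p ^ n = 1 := by
    have h1 := hfix τ
    rw [map_pow] at h1
    rw [hζdef, mul_pow, inv_pow, h1, mul_inv_cancel₀ (pow_ne_zero _ hx0)]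
  have hζfix : τ ζ = ζ := hτ ζ (hroots ζ n hζpow)
  have hτx : τ x = ζ * x := by
    rw [hζdef, mul_assoc, inv_mul_cancel₀ hx0, mul_one]
  -- RHS: τ^a x = ζ^a * x
  have hRHS : ∀ k : ℕ, (τ ^ k) x = ζ ^ k * x := by
    intro k
    induction k with
    | zero => simp
    | succ k ih =>
        rw [pow_succ', AlgEquiv.mul_apply, ih, map_mul, map_pow, hζfix, hτx,
          pow_succ']
        ring
  -- LHS
  set y : AlgebraicClosure F := σ⁻¹ x with hydef
  have hypow : y ^ p ^ n = x ^ p ^ n := by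
    rw [hydef, ← map_pow, hfix σ⁻¹]
  set θ : AlgebraicClosure F := y * x⁻¹ with hθdef
  have hθpow : θ ^ p ^ n = 1 := by
    rw [hθdef, mul_pow, inv_pow, hypow, mul_inv_cancel₀ (pow_ne_zero _ hx0)]
  have hθfix : τ θ = θ := hτ θ (hroots θ n hθpow)
  have hyθ : y = θ * x := by
    rw [hθdef, mul_assoc, inv_mul_cancel₀ hx0, mul_one]
  have hτy : τ y = ζ * y := by
    rw [hyθ, map_mul, hθfix, hτx]; ring
  have hσζ : σ ζ = ζ ^ a := hσ ζ hζpow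
  calc (σ * τ * σ⁻¹) x = σ (τ y) := rfl
    _ = σ ζ * σ y := by rw [hτy, map_mul]
    _ = ζ ^ a * x := by rw [hσζ, hydef, show σ (σ⁻¹ x) = x from σ.apply_symm_apply x]
    _ = (τ ^ a) x := (hRHS a).symm
end

section
/- Let G be a profinite group, H a closed normal abelian subgroup of G, and suppose there exist an integer c > 1 and σ₀ ∈ G such that σ₀ τ σ₀^{-1} = τ^c for all τ ∈ H. Let E be a topological field and V a continuous E-linear representation of G of dimension ≤ d, and set m = lcm{c^r − 1 : 1 ≤ r ≤ d}. Then for every τ ∈ H, the element τ^m acts unipotently on V, i.e., all eigenvalues of τ^m on V (in an algebraic closure of E) are equal to 1. -/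
open Polynomial

lemma stmt3_aux {K : Type} [Field K] [IsAlgClosed K] {W : Type} [AddCommGroup W] [Module K W]
    [FiniteDimensional K W] {c d : ℕ} (hc : 1 < c) (hdim : Module.finrank K W ≤ d)
    (g : Module.End K W) (hg : IsUnit g) (u : (Module.End K W)ˣ)
    (hcj : (u : Module.End K W) * g * ↑u⁻¹ = g ^ c) :
    IsNilpotent (g ^ ((Finset.Icc 1 d).lcm fun r => c ^ r - 1) - 1) := by
  classical
  set m := (Finset.Icc 1 d).lcm fun r => c ^ r - 1 with hm
  have hint : IsIntegral K g := LinearMap.isIntegral g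
  set p := minpoly K g with hp
  have hpne : p ≠ 0 := minpoly.ne_zero hint
  -- spectrum is mapped onto itself by `x ↦ x ^ c`
  have hs_fin : (spectrum K g).Finite := Module.End.finite_spectrum g
  have hspecpow : spectrum K (g ^ c) = (· ^ c) '' spectrum K g :=
    spectrum.map_pow_of_pos g (by omega)
  have hspeceq : (· ^ c) '' spectrum K g = spectrum K g := by
    rw [← hspecpow, ← hcj, spectrum.units_conjugate]
  have hmapsto : Set.MapsTo (· ^ c) (spectrum K g) (spectrum K g) := by
    intro x hx
    rw [← hspeceq]; exact ⟨x, hx, rfl⟩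
  have hsurj : Set.SurjOn (· ^ c) (spectrum K g) (spectrum K g) := by
    intro y hy
    rw [hspeceq]; exact hy
  have hbij := (hs_fin.surjOn_iff_bijOn_of_mapsTo hmapsto).mp hsurj
  -- spectrum is contained in the roots of the minimal polynomial
  have hsub : ∀ μ ∈ spectrum K g, μ ∈ p.roots := by
    intro μ hμ
    exact (Polynomial.mem_roots hpne).mpr
      (Module.End.hasEigenvalue_iff_isRoot.mp
        (Module.End.hasEigenvalue_iff_mem_spectrum.mpr hμ))
  -- cardinality bound
  have hcard : hs_fin.toFinset.card ≤ d := by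
    have h1 : hs_fin.toFinset ⊆ p.roots.toFinset := by
      intro x hx
      exact Multiset.mem_toFinset.mpr (hsub x (hs_fin.mem_toFinset.mp hx))
    calc hs_fin.toFinset.card ≤ p.roots.toFinset.card := Finset.card_le_card h1
      _ ≤ Multiset.card p.roots := p.roots.toFinset_card_le
      _ ≤ p.natDegree := p.card_roots'
      _ ≤ (LinearMap.charpoly g).natDegree :=
          Polynomial.natDegree_le_of_dvd (LinearMap.minpoly_dvd_charpoly g)
            (LinearMap.charpoly_monic g).ne_zero
      _ = Module.finrank K W := LinearMap.charpoly_natDegree g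
      _ ≤ d := hdim
  -- spectrum elements are nonzero
  have hne : ∀ μ ∈ spectrum K g, μ ≠ 0 := by
    intro μ hμ h0
    rw [h0] at hμ
    exact (spectrum.zero_mem_iff K).mp hμ hg
  -- every spectrum element satisfies μ ^ m = 1
  have horbit : ∀ μ ∈ spectrum K g, μ ^ m = 1 := by
    intro μ hμ
    have hiter : ∀ k : ℕ, (· ^ c)^[k] μ ∈ spectrum K g := by
      intro k
      induction k with
      | zero => simpa using hμ
      | succ k ih => rw [Function.iterate_succ_apply']; exact hmapsto ih
    have hform : ∀ k : ℕ, (· ^ c)^[k] μ = μ ^ c ^ k := by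
      intro k
      induction k with
      | zero => simp
      | succ k ih => rw [Function.iterate_succ_apply', ih]; simp [← pow_mul, pow_succ]
    obtain ⟨i, hi, j, hj, hij, heq⟩ :=
      Finset.exists_ne_map_eq_of_card_lt_of_maps_to
        (s := Finset.range (d + 1)) (t := hs_fin.toFinset)
        (by simpa using Nat.lt_succ_of_le hcard)
        (fun a _ => hs_fin.mem_toFinset.mpr (hiter a))
    simp only [Finset.mem_range] at hi hj
    -- wlog i < j
    have main : ∀ i j : ℕ, i < j → j < d + 1 →
        (· ^ c)^[i] μ = (· ^ c)^[j] μ → ∃ r, 1 ≤ r ∧ r ≤ d ∧ μ ^ c ^ r = μ := by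
      intro i j hlt hjd he
      refine ⟨j - i, by omega, by omega, ?_⟩
      have h2 : (· ^ c)^[i] ((· ^ c)^[j - i] μ) = (· ^ c)^[i] μ := by
        rw [← Function.iterate_add_apply]
        rw [he]
        congr 1
        omega
      have hinj := (hbij.iterate i).injOn
      have h3 : (· ^ c)^[j - i] μ = μ := by
        apply hinj (hiter _) hμ h2
      rw [hform] at h3
      exact h3
    have hres : ∃ r, 1 ≤ r ∧ r ≤ d ∧ μ ^ c ^ r = μ := by
      rcases lt_or_gt_of_ne hij with h | h
      · exact main i j h hj heq
      · exact main j i h hi heq.symm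
    obtain ⟨r, hr1, hrd, hr⟩ := hres
    have hcr1 : 1 ≤ c ^ r := Nat.one_le_pow _ _ (by omega)
    have hone : μ ^ (c ^ r - 1) = 1 := by
      have h1 : μ ^ (c ^ r - 1) * μ = 1 * μ := by
        rw [one_mul, ← pow_succ, Nat.sub_add_cancel hcr1]
        exact hr
      exact mul_right_cancel₀ (hne μ hμ) h1
    obtain ⟨k, hk⟩ : (c ^ r - 1) ∣ m :=
      Finset.dvd_lcm (Finset.mem_Icc.mpr ⟨hr1, hrd⟩)
    rw [hk, pow_mul, hone, one_pow]
  -- minimal polynomial divides (X ^ m - 1) ^ (number of roots)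
  have hfact : p = (p.roots.map fun a => X - C a).prod :=
    (IsAlgClosed.splits p).eq_prod_roots_of_monic (minpoly.monic hint)
  have hdvd : p ∣ (X ^ m - 1) ^ Multiset.card p.roots := by
    have h1 : (p.roots.map fun a => X - C a).prod ∣
        (p.roots.map fun _ => (X : K[X]) ^ m - 1).prod := by
      apply Multiset.prod_dvd_prod_of_dvd
      intro a ha
      rw [Polynomial.dvd_iff_isRoot]
      have hμ : a ∈ spectrum K g :=
        Module.End.hasEigenvalue_iff_mem_spectrum.mp
          (Module.End.hasEigenvalue_iff_isRoot.mpr (Polynomial.isRoot_of_mem_roots ha))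
      simp [Polynomial.IsRoot, horbit a hμ]
    rw [Multiset.map_const', Multiset.prod_replicate] at h1
    calc p = (p.roots.map fun a => X - C a).prod := hfact
      _ ∣ _ := h1
  obtain ⟨q, hq⟩ := hdvd
  refine ⟨Multiset.card p.roots, ?_⟩
  have haev : (g ^ m - 1) ^ Multiset.card p.roots =
      Polynomial.aeval g (((X : K[X]) ^ m - 1) ^ Multiset.card p.roots) := by
    simp
  rw [haev, hq, map_mul]
  rw [show Polynomial.aeval g p = 0 from minpoly.aeval K g, zero_mul]

/-- Let `G` be a profinite group, `H` a closed normal abelian subgroup,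
and suppose there are `c > 1` and `σ₀ ∈ G` with `σ₀ τ σ₀⁻¹ = τ^c` for all `τ ∈ H`.
Let `E` be a topological field and `V` a continuous `E`-linear representation of `G` of
dimension `≤ d`, and set `m = lcm {c^r - 1 : 1 ≤ r ≤ d}`.  Then for every `τ ∈ H` the
element `τ^m` acts unipotently on `V` (i.e. `ρ(τ^m) - 1` is nilpotent, equivalently all
eigenvalues of `ρ(τ^m)` in an algebraic closure of `E` are `1`). -/

theorem stmt3 (G : Type) [Group G] [TopologicalSpace G] [IsTopologicalGroup G]
    [CompactSpace G] [T2Space G] [TotallyDisconnectedSpace G]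
    (H : Subgroup G) (hHclosed : IsClosed (H : Set G)) (hHnormal : H.Normal)
    (hHab : ∀ a b : ↥H, a * b = b * a)
    (c : ℕ) (hc : 1 < c) (σ₀ : G) (hconj : ∀ τ ∈ H, σ₀ * τ * σ₀⁻¹ = τ ^ c)
    (d : ℕ) (E : Type) [Field E] [TopologicalSpace E] [IsTopologicalRing E]
    (V : Type) [AddCommGroup V] [Module E V] [TopologicalSpace V]
    [FiniteDimensional E V] (hdim : Module.finrank E V ≤ d)
    (ρ : Representation E G V)
    (hcont : Continuous fun gv : G × V => ρ gv.1 gv.2) :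
    ∀ τ ∈ H, IsNilpotent
      ((ρ (τ ^ ((Finset.Icc 1 d).lcm fun r => c ^ r - 1)) : Module.End E V) - 1) := by
  classical
  intro τ hτ
  set m := (Finset.Icc 1 d).lcm fun r => c ^ r - 1 with hm
  set n := Module.finrank E V with hn
  let b : Module.Basis (Fin n) E V := Module.finBasis E V
  let K := AlgebraicClosure E
  let ψ₁ : Module.End E V →+* Matrix (Fin n) (Fin n) E :=
    (LinearMap.toMatrixAlgEquiv b).toAlgHom.toRingHom
  let ψ₂ : Matrix (Fin n) (Fin n) E →+* Matrix (Fin n) (Fin n) K :=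
    (algebraMap E K).mapMatrix
  let ψ₃ : Matrix (Fin n) (Fin n) K →+* Module.End K (Fin n → K) :=
    (Matrix.toLinAlgEquiv' : Matrix (Fin n) (Fin n) K ≃ₐ[K] _).toAlgHom.toRingHom
  let φ : Module.End E V →+* Module.End K (Fin n → K) := ψ₃.comp (ψ₂.comp ψ₁)
  have hφinj : Function.Injective φ := by
    intro x y hxy
    have h3 : Function.Injective ψ₃ :=
      (Matrix.toLinAlgEquiv' : Matrix (Fin n) (Fin n) K ≃ₐ[K] _).injective
    have h2 : Function.Injective ψ₂ := by
      intro a b hab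
      exact Matrix.map_injective (algebraMap E K).injective hab
    have h1 : Function.Injective ψ₁ := (LinearMap.toMatrixAlgEquiv b).injective
    exact h1 (h2 (h3 hxy))
  -- units
  have hρτ : IsUnit (ρ τ) :=
    ⟨⟨ρ τ, ρ τ⁻¹, by rw [← map_mul, mul_inv_cancel, map_one],
      by rw [← map_mul, inv_mul_cancel, map_one]⟩, rfl⟩
  have hρσ : IsUnit (ρ σ₀) :=
    ⟨⟨ρ σ₀, ρ σ₀⁻¹, by rw [← map_mul, mul_inv_cancel, map_one],
      by rw [← map_mul, inv_mul_cancel, map_one]⟩, rfl⟩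
  set g : Module.End K (Fin n → K) := φ (ρ τ) with hg
  have hgu : IsUnit g := hρτ.map φ
  set u : (Module.End K (Fin n → K))ˣ := (hρσ.map φ).unit with hu
  have huv : (u : Module.End K (Fin n → K)) = φ (ρ σ₀) := rfl
  have huinv : (↑u⁻¹ : Module.End K (Fin n → K)) = φ (ρ σ₀⁻¹) := by
    apply Units.inv_eq_of_mul_eq_one_right
    rw [huv, ← map_mul, ← map_mul ρ, mul_inv_cancel, map_one, map_one]
  have hcj : (u : Module.End K (Fin n → K)) * g * ↑u⁻¹ = g ^ c := by
    rw [huv, huinv, hg, ← map_mul, ← map_mul, ← map_mul ρ, ← map_mul ρ,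
      hconj τ hτ, map_pow ρ, map_pow φ]
  have hdim' : Module.finrank K (Fin n → K) ≤ d := by
    rw [Module.finrank_fin_fun]
    exact hdim
  have hnil : IsNilpotent (g ^ m - 1) := stmt3_aux hc hdim' g hgu u hcj
  obtain ⟨k, hk⟩ := hnil
  refine ⟨k, ?_⟩
  apply hφinj
  have h1 : φ (ρ (τ ^ m) - 1) = g ^ m - 1 := by
    rw [map_sub, map_one, map_pow ρ, map_pow φ]
  rw [map_pow, h1, hk, map_zero]
end

section
/- Let G be a group, E a field, and V a nonzero finite dimensional E-representation of G. Assume char E = 0 or char E > dim_E V, and assume G acts unipotently on V (every σ ∈ G has all eigenvalues 1). Then every irreducible G-stable subquotient of V is one-dimensional with trivial G-action; in particular V^G ≠ 0. -/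
open Module LinearMap
set_option synthInstance.maxHeartbeats 1000000
set_option maxHeartbeats 4000000

section Key
variable {G E Q : Type} [Group G] [Field E] [AddCommGroup Q] [Module E Q] [FiniteDimensional E Q]

/-- Trace of each `ρ h` is the dimension. -/
lemma trace_rho (ρ : Representation E G Q)
    (hunip : ∀ g : G, IsNilpotent ((ρ g : Module.End E Q) - 1)) (h : G) :
    LinearMap.trace E Q (ρ h) = (Module.finrank E Q : E) := by
  have : (ρ h : Module.End E Q) = 1 + ((ρ h : Module.End E Q) - 1) := by abel
  rw [this, map_add, LinearMap.trace_one E Q,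
    (LinearMap.isNilpotent_trace_of_isNilpotent (hunip h)).eq_zero, add_zero]

lemma key (ρ : Representation E G Q)
    (hunip : ∀ g : G, IsNilpotent ((ρ g : Module.End E Q) - 1))
    (hchar : ∀ m : ℕ, m ≤ Module.finrank E Q → (m : E) = 0 → m = 0)
    (hirr : ∀ U : Submodule E Q, (∀ g : G, ∀ x ∈ U, ρ g x ∈ U) → U = ⊥ ∨ U = ⊤)
    (g : G) (x : Q) : ρ g x = x := by
  rcases subsingleton_or_nontrivial Q with hQ | hQ
  · exact Subsingleton.elim _ _
  set S : Subalgebra E (Module.End E Q) := (Representation.asAlgebraHom ρ).range with hS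
  have hρS : ∀ h : G, (ρ h : Module.End E Q) ∈ S := fun h =>
    ⟨MonoidAlgebra.of E G h, ρ.asAlgebraHom_of h⟩
  have hsmul : ∀ (s : S) (q : Q), s • q = (s : Module.End E Q) q := fun _ _ => rfl
  -- trace identity on S
  have htrS : ∀ (s : S) (h : G),
      LinearMap.trace E Q ((s : Module.End E Q) * ρ h) = LinearMap.trace E Q s := by
    rintro ⟨-, r, rfl⟩ h
    show LinearMap.trace E Q (ρ.asAlgebraHom r * ρ h) = LinearMap.trace E Q (ρ.asAlgebraHom r)
    induction r using MonoidAlgebra.induction_linear with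
    | zero => simp
    | add f g hf hg => rw [map_add, add_mul, map_add, map_add, hf, hg]
    | single a b =>
      rw [Representation.asAlgebraHom_single, smul_mul_assoc, map_smul, map_smul]
      congr 1
      have : (ρ a : Module.End E Q) * ρ h = ρ (a * h) := (map_mul ρ a h).symm
      rw [this, trace_rho ρ hunip, trace_rho ρ hunip]
  -- Q is a simple S-module
  haveI hsimp : IsSimpleModule S Q := by
    rw [isSimpleModule_iff]; constructor
    · rintro N
      let N' : Submodule E Q :=
        { carrier := N
          add_mem' := fun ha hb => N.add_mem ha hb
          zero_mem' := N.zero_mem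
          smul_mem' := fun c x hx => by
            have : c • x = (⟨algebraMap E (Module.End E Q) c, S.algebraMap_mem c⟩ : S) • x := by
              rw [hsmul]
              exact (Module.algebraMap_end_apply E E Q c x).symm
            show c • x ∈ N
            rw [this]
            exact N.smul_mem _ hx }
      have hN' : ∀ (h : G), ∀ y ∈ N', ρ h y ∈ N' := fun h y hy => by
        show (⟨ρ h, hρS h⟩ : S) • y ∈ N
        exact N.smul_mem _ hy
      rcases hirr N' hN' with hbot | htop
      · left
        rw [eq_bot_iff]
        intro y hy
        have : y ∈ N' := hy
        rw [hbot] at this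
        simpa using this
      · right
        rw [eq_top_iff]
        intro y _
        have : y ∈ N' := htop ▸ Submodule.mem_top
        exact this
  -- S is a semisimple ring
  haveI hss : IsSemisimpleModule S Q := by
    apply IsSemisimpleModule.of_sSup_simples_eq_top
    apply le_antisymm le_top
    apply le_sSup
    show IsSimpleModule S (⊤ : Submodule S Q)
    exact IsSimpleModule.congr Submodule.topEquiv
  set n := Module.finrank E Q with hn
  let b : Basis (Fin n) E Q := Module.finBasis E Q
  let Φ : S →ₗ[S] (Fin n → Q) :=
    { toFun := fun s i => s • b i
      map_add' := fun s t => by funext i; exact add_smul s t (b i)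
      map_smul' := fun c s => by funext i; exact mul_smul c s (b i) }
  have hΦ : Function.Injective Φ := by
    intro s t hst
    have h0 : ∀ i, (s : Module.End E Q) (b i) = (t : Module.End E Q) (b i) := fun i =>
      congrFun hst i
    have : (s : Module.End E Q) = (t : Module.End E Q) := Basis.ext b h0
    exact Subtype.ext this
  haveI : IsSemisimpleModule S (Fin n → Q) := by
    refine isSemisimpleModule_of_isSemisimpleModule_submodule' (R := S) (M := Fin n → Q)
      (p := fun i : Fin n => LinearMap.range (LinearMap.single S (fun _ : Fin n => Q) i)) ?_ ?_
    · intro i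
      exact IsSemisimpleModule.congr
        (LinearEquiv.ofInjective _ (Pi.single_injective (M := fun _ : Fin n => Q) i)).symm
    · exact LinearMap.iSup_range_single S _
  haveI hring : IsSemisimpleRing S :=
    IsSemisimpleModule.congr (M := LinearMap.range Φ) (LinearEquiv.ofInjective Φ hΦ)
  -- the augmentation ideal
  set I : Ideal S := Ideal.span {x | ∃ h : G, (⟨ρ h, hρS h⟩ : S) - 1 = x} with hI
  have hτ : ∀ s ∈ I, LinearMap.trace E Q (s : Module.End E Q) = 0 := by
    have main : ∀ s ∈ I, ∀ t : S, LinearMap.trace E Q ((t * s : S) : Module.End E Q) = 0 := by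
      intro s hs
      induction hs using Submodule.span_induction with
      | mem x hx =>
        obtain ⟨h, rfl⟩ := hx
        intro t
        have : ((t * (⟨ρ h, hρS h⟩ - 1) : S) : Module.End E Q)
            = (t : Module.End E Q) * ρ h - (t : Module.End E Q) := by
          push_cast
          rw [mul_sub, mul_one]
        rw [this, map_sub, htrS t h, sub_self]
      | zero => intro t; rw [mul_zero]; simp
      | add x y _ _ hx hy =>
        intro t
        have h1 := hx t
        have h2 := hy t
        push_cast at h1 h2 ⊢
        rw [mul_add, map_add, h1, h2, add_zero]
      | smul c x _ hx => intro t; rw [smul_eq_mul, ← mul_assoc]; exact hx (t * c)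
    intro s hs
    have := main s hs 1
    rwa [one_mul] at this
  obtain ⟨e, he_idem, hIe⟩ := IsSemisimpleRing.ideal_eq_span_idempotent I
  have heI : e ∈ I := hIe ▸ Ideal.subset_span rfl
  have hetr : LinearMap.trace E Q (e : Module.End E Q) = 0 := hτ e heI
  have heidem' : (e : Module.End E Q) ∘ₗ (e : Module.End E Q) = (e : Module.End E Q) := by
    have := congrArg (Subtype.val) he_idem
    push_cast at this
    exact this
  obtain ⟨p, hp⟩ := (LinearMap.isProj_iff_isIdempotentElem _).mpr heidem'
  have htr' : LinearMap.trace E Q (e : Module.End E Q) = (Module.finrank E p : E) := hp.trace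
  have hp0 : Module.finrank E p = 0 := by
    apply hchar _ (Submodule.finrank_le p)
    rw [← htr', hetr]
  have hpbot : p = ⊥ := Submodule.finrank_eq_zero.mp hp0
  have he0 : e = 0 := by
    apply Subtype.ext
    apply LinearMap.ext
    intro y
    have := hp.map_mem y
    rw [hpbot] at this
    simpa using this
  have hIbot : I = ⊥ := by rw [hIe, he0, Ideal.span_singleton_eq_bot]
  have hx : (⟨ρ g, hρS g⟩ : S) - 1 ∈ I := Ideal.subset_span ⟨g, rfl⟩
  rw [hIbot] at hx
  have : (⟨ρ g, hρS g⟩ : S) = 1 := by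
    have := Submodule.mem_bot (R := S) |>.mp hx
    exact sub_eq_zero.mp this
  have hval : (ρ g : Module.End E Q) = 1 := congrArg Subtype.val this
  rw [hval]
  rfl


section Plumb
variable {G E M : Type} [Group G] [Field E] [AddCommGroup M] [Module E M]

/-- Restriction of a representation to an invariant submodule. -/
noncomputable def resRep (ρ : Representation E G M) (W : Submodule E M)
    (hW : ∀ g : G, ∀ x ∈ W, ρ g x ∈ W) : Representation E G W where
  toFun g := (ρ g).restrict (fun x hx => hW g x hx)
  map_one' := by
    apply LinearMap.ext
    intro x
    apply Subtype.ext
    show ρ 1 (x : M) = x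
    rw [map_one]
    rfl
  map_mul' g h := by
    apply LinearMap.ext
    intro x
    apply Subtype.ext
    show ρ (g * h) (x : M) = ρ g (ρ h (x : M))
    rw [map_mul]
    rfl

lemma resRep_coe (ρ : Representation E G M) (W : Submodule E M)
    (hW : ∀ g : G, ∀ x ∈ W, ρ g x ∈ W) (g : G) (x : W) :
    (resRep ρ W hW g x : M) = ρ g (x : M) := rfl

lemma resRep_pow_coe (ρ : Representation E G M) (W : Submodule E M)
    (hW : ∀ g : G, ∀ x ∈ W, ρ g x ∈ W) (g : G) (j : ℕ) (x : W) :
    ((((resRep ρ W hW g : Module.End E W) - 1) ^ j) x : M)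
      = (((ρ g : Module.End E M) - 1) ^ j) (x : M) := by
  have h1 : ∀ y : W, (((resRep ρ W hW g : Module.End E W) - 1) y : M)
      = ((ρ g : Module.End E M) - 1) (y : M) := by
    intro y
    rw [LinearMap.sub_apply, LinearMap.sub_apply, Module.End.one_apply, Module.End.one_apply,
      Submodule.coe_sub, resRep_coe]
  induction j with
  | zero => simp
  | succ j ih =>
    rw [pow_succ', pow_succ', Module.End.mul_apply, Module.End.mul_apply, h1, ih]

lemma resRep_unip (ρ : Representation E G M) (W : Submodule E M)
    (hW : ∀ g : G, ∀ x ∈ W, ρ g x ∈ W)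
    (hunip : ∀ g : G, IsNilpotent ((ρ g : Module.End E M) - 1)) (g : G) :
    IsNilpotent ((resRep ρ W hW g : Module.End E W) - 1) := by
  obtain ⟨k, hk⟩ := hunip g
  refine ⟨k, ?_⟩
  apply LinearMap.ext
  intro x
  apply Subtype.ext
  rw [resRep_pow_coe]
  rw [hk]
  rfl

/-- Quotient representation. -/
noncomputable def quotRep (σ : Representation E G M) (p : Submodule E M)
    (hp : ∀ g : G, ∀ x ∈ p, σ g x ∈ p) : Representation E G (M ⧸ p) where
  toFun g := p.mapQ p (σ g) (fun x hx => hp g x hx)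
  map_one' := by
    refine Submodule.linearMap_qext _ ?_
    apply LinearMap.ext
    intro x
    simp [Submodule.mapQ_apply]
  map_mul' g h := by
    refine Submodule.linearMap_qext _ ?_
    apply LinearMap.ext
    intro x
    simp [Submodule.mapQ_apply, map_mul]

lemma quotRep_apply (σ : Representation E G M) (p : Submodule E M)
    (hp : ∀ g : G, ∀ x ∈ p, σ g x ∈ p) (g : G) :
    quotRep σ p hp g = p.mapQ p (σ g) (fun x hx => hp g x hx) := rfl

lemma quotRep_mk (σ : Representation E G M) (p : Submodule E M)
    (hp : ∀ g : G, ∀ x ∈ p, σ g x ∈ p) (g : G) (x : M) :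
    quotRep σ p hp g (Submodule.Quotient.mk x) = Submodule.Quotient.mk (σ g x) := by
  rw [quotRep_apply, Submodule.mapQ_apply]

lemma quotRep_pow_mk (σ : Representation E G M) (p : Submodule E M)
    (hp : ∀ g : G, ∀ x ∈ p, σ g x ∈ p) (g : G) (j : ℕ) (x : M) :
    (((quotRep σ p hp g : Module.End E (M ⧸ p)) - 1) ^ j) (Submodule.Quotient.mk x)
      = Submodule.Quotient.mk ((((σ g : Module.End E M) - 1) ^ j) x) := by
  have h1 : ∀ y : M, ((quotRep σ p hp g : Module.End E (M ⧸ p)) - 1) (Submodule.Quotient.mk y)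
      = Submodule.Quotient.mk (((σ g : Module.End E M) - 1) y) := by
    intro y
    rw [LinearMap.sub_apply, Module.End.one_apply, quotRep_mk,
      LinearMap.sub_apply, Module.End.one_apply, Submodule.Quotient.mk_sub]
  induction j with
  | zero => simp
  | succ j ih =>
    rw [pow_succ', pow_succ', Module.End.mul_apply, Module.End.mul_apply, ih, h1]

lemma quotRep_unip (σ : Representation E G M) (p : Submodule E M)
    (hp : ∀ g : G, ∀ x ∈ p, σ g x ∈ p)
    (hunip : ∀ g : G, IsNilpotent ((σ g : Module.End E M) - 1)) (g : G) :
    IsNilpotent ((quotRep σ p hp g : Module.End E (M ⧸ p)) - 1) := by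
  obtain ⟨k, hk⟩ := hunip g
  refine ⟨k, ?_⟩
  apply LinearMap.ext
  intro q
  obtain ⟨x, rfl⟩ := Submodule.Quotient.mk_surjective p q
  rw [quotRep_pow_mk, hk]
  simp

end Plumb

/-- Let `G` be a group, `E` a field, `V` a nonzero finite dimensional
`E`-representation of `G` with `char E = 0` or `char E > dim V`, on which `G` acts
unipotently.  Then every irreducible `G`-stable subquotient `W/W'` of `V` is
one-dimensional with trivial `G`-action; in particular `V^G ≠ 0`. -/
theorem stmt5 (G : Type) [Group G] (E : Type) [Field E]
    (V : Type) [AddCommGroup V] [Module E V] [FiniteDimensional E V] [Nontrivial V]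
    (hchar : ringChar E = 0 ∨ Module.finrank E V < ringChar E)
    (ρ : Representation E G V)
    (hunip : ∀ g : G, IsNilpotent ((ρ g : Module.End E V) - 1)) :
    (∀ W' W : Submodule E V,
      (∀ g : G, ∀ x ∈ W', ρ g x ∈ W') → (∀ g : G, ∀ x ∈ W, ρ g x ∈ W) →
      W' ≤ W → W' ≠ W →
      (∀ U : Submodule E V, (∀ g : G, ∀ x ∈ U, ρ g x ∈ U) → W' ≤ U → U ≤ W →
        U = W' ∨ U = W) →
      (Module.finrank E ↥W = Module.finrank E ↥W' + 1 ∧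
        ∀ g : G, ∀ x ∈ W, ρ g x - x ∈ W')) ∧
    ∃ v : V, v ≠ 0 ∧ ∀ g : G, ρ g v = v := by
  classical
  have hcharN : ∀ m : ℕ, m ≤ Module.finrank E V → (m : E) = 0 → m = 0 := by
    intro m hm h0
    have hd : ringChar E ∣ m := (ringChar.spec E m).mp h0
    rcases hchar with h | h
    · rw [h] at hd
      exact zero_dvd_iff.mp hd
    · by_contra hne
      have := Nat.le_of_dvd (Nat.pos_of_ne_zero hne) hd
      omega
  constructor
  · intro W' W hW' hW hle hne hmax
    set p : Submodule E W := W'.comap W.subtype with hp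
    set ρW : Representation E G W := resRep ρ W hW with hρW
    have hpinv : ∀ g : G, ∀ x ∈ p, ρW g x ∈ p := by
      intro g x hx
      have hx' : (x : V) ∈ W' := hx
      show (ρW g x : V) ∈ W'
      rw [hρW, resRep_coe]
      exact hW' g _ hx'
    set ρQ : Representation E G (W ⧸ p) := quotRep ρW p hpinv with hρQ
    have hunipQ : ∀ g : G, IsNilpotent ((ρQ g : Module.End E (W ⧸ p)) - 1) :=
      fun g => quotRep_unip ρW p hpinv (fun g' => resRep_unip ρ W hW hunip g') g
    have hcharQ : ∀ m : ℕ, m ≤ Module.finrank E (W ⧸ p) → (m : E) = 0 → m = 0 := by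
      intro m hm
      apply hcharN
      calc m ≤ Module.finrank E (W ⧸ p) := hm
        _ ≤ Module.finrank E W := Submodule.finrank_quotient_le p
        _ ≤ Module.finrank E V := Submodule.finrank_le W
    have hirrQ : ∀ U : Submodule E (W ⧸ p), (∀ g : G, ∀ x ∈ U, ρQ g x ∈ U) →
        U = ⊥ ∨ U = ⊤ := by
      intro U hU
      set U₁ : Submodule E W := U.comap p.mkQ with hU₁
      set Uv : Submodule E V := U₁.map W.subtype with hUv
      have hmem : ∀ y : W, y ∈ U₁ ↔ Submodule.Quotient.mk y ∈ U := by
        intro y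
        rw [hU₁, Submodule.mem_comap, Submodule.mkQ_apply]
      have hUvW : Uv ≤ W := by
        rintro x ⟨y, hy, rfl⟩
        exact y.2
      have hW'Uv : W' ≤ Uv := by
        intro x hx
        refine ⟨⟨x, hle hx⟩, (hmem _).mpr ?_, rfl⟩
        have hxp : (⟨x, hle hx⟩ : W) ∈ p := hx
        rw [(Submodule.Quotient.mk_eq_zero p).mpr hxp]
        exact U.zero_mem
      have hUvinv : ∀ g : G, ∀ x ∈ Uv, ρ g x ∈ Uv := by
        rintro g x ⟨y, hy, rfl⟩
        refine ⟨ρW g y, (hmem _).mpr ?_, (resRep_coe ρ W hW g y)⟩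
        have : Submodule.Quotient.mk (ρW g y) = ρQ g (Submodule.Quotient.mk y) :=
          (quotRep_mk ρW p hpinv g y).symm
        rw [this]
        exact hU g _ ((hmem y).mp hy)
      rcases hmax Uv hUvinv hW'Uv hUvW with h | h
      · left
        rw [eq_bot_iff]
        intro q hq
        obtain ⟨y, rfl⟩ := Submodule.Quotient.mk_surjective p q
        have hy1 : y ∈ U₁ := (hmem y).mpr hq
        have : (y : V) ∈ Uv := ⟨y, hy1, rfl⟩
        rw [h] at this
        have hyp : y ∈ p := this
        rw [Submodule.mem_bot]
        exact (Submodule.Quotient.mk_eq_zero p).mpr hyp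
      · right
        rw [eq_top_iff]
        intro q _
        obtain ⟨y, rfl⟩ := Submodule.Quotient.mk_surjective p q
        have : (y : V) ∈ Uv := by rw [h]; exact y.2
        obtain ⟨z, hz, hzy⟩ := this
        have hzy' : z = y := Subtype.ext hzy
        rw [← hzy']
        exact (hmem z).mp hz
    have htriv : ∀ (g : G) (x : W ⧸ p), ρQ g x = x :=
      fun g x => key ρQ hunipQ hcharQ hirrQ g x
    constructor
    · -- dimension count
      have hQnt : Nontrivial (W ⧸ p) := by
        obtain ⟨x, hxW, hxW'⟩ := SetLike.exists_of_lt (lt_of_le_of_ne hle hne)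
        refine ⟨⟨Submodule.Quotient.mk ⟨x, hxW⟩, 0, fun hc => hxW' ?_⟩⟩
        exact (Submodule.Quotient.mk_eq_zero p).mp hc
      obtain ⟨v, hv⟩ := exists_ne (0 : W ⧸ p)
      have hsp : Submodule.span E {v} = ⊤ := by
        rcases hirrQ (Submodule.span E {v})
            (fun g y hy => by rw [htriv g y]; exact hy) with h | h
        · exact absurd (Submodule.span_singleton_eq_bot.mp h) hv
        · exact h
      have hrk1 : Module.finrank E (W ⧸ p) = 1 := by
        rw [← finrank_top E (W ⧸ p), ← hsp]
        exact finrank_span_singleton hv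
      have harith := Submodule.finrank_quotient_add_finrank p
      have hp' : Module.finrank E p = Module.finrank E W' :=
        (Submodule.comapSubtypeEquivOfLe hle).finrank_eq
      omega
    · intro g x hx
      have h0 := htriv g (Submodule.Quotient.mk ⟨x, hx⟩)
      rw [quotRep_mk] at h0
      have hsub : ((ρW g ⟨x, hx⟩ : W) - ⟨x, hx⟩) ∈ p := by
        rw [← Submodule.Quotient.eq]
        exact h0
      have hmem2 : ρ g x - x ∈ W := W.sub_mem (hW g x hx) hx
      have heq : ((ρW g ⟨x, hx⟩ : W) - ⟨x, hx⟩ : W) = (⟨ρ g x - x, hmem2⟩ : W) := by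
        apply Subtype.ext
        rw [Submodule.coe_sub, hρW, resRep_coe]
      rw [heq] at hsub
      exact hsub
  · -- fixed vector
    let P : ℕ → Prop := fun m => ∃ U : Submodule E V,
      (∀ g : G, ∀ x ∈ U, ρ g x ∈ U) ∧ U ≠ ⊥ ∧ Module.finrank E ↥U = m
    have hex : ∃ m, P m := by
      refine ⟨Module.finrank E V, ⊤, fun g x _ => Submodule.mem_top, ?_, finrank_top E V⟩
      exact fun h => absurd h.symm bot_ne_top
    obtain ⟨Mo, hMoinv, hMone, hMorank⟩ := Nat.find_spec hex
    have hMomin : ∀ U : Submodule E V, (∀ g : G, ∀ x ∈ U, ρ g x ∈ U) → U ≠ ⊥ →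
        Module.finrank E ↥Mo ≤ Module.finrank E ↥U := by
      intro U hU hUne
      rw [hMorank]
      exact Nat.find_min' hex ⟨U, hU, hUne, rfl⟩
    set ρM : Representation E G Mo := resRep ρ Mo hMoinv with hρM
    have hirrM : ∀ U : Submodule E Mo, (∀ g : G, ∀ x ∈ U, ρM g x ∈ U) → U = ⊥ ∨ U = ⊤ := by
      intro U hU
      set Uv : Submodule E V := U.map Mo.subtype with hUv
      have hUvinv : ∀ g : G, ∀ x ∈ Uv, ρ g x ∈ Uv := by
        rintro g x ⟨y, hy, rfl⟩
        exact ⟨ρM g y, hU g y hy, resRep_coe ρ Mo hMoinv g y⟩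
      by_cases hUvb : Uv = ⊥
      · left
        rw [eq_bot_iff]
        intro y hy
        have : (y : V) ∈ Uv := ⟨y, hy, rfl⟩
        rw [hUvb, Submodule.mem_bot] at this
        rw [Submodule.mem_bot]
        exact Subtype.ext this
      · right
        have hle2 : Uv ≤ Mo := by
          rintro x ⟨y, hy, rfl⟩
          exact y.2
        have hUvMo : Uv = Mo :=
          Submodule.eq_of_le_of_finrank_le hle2 (hMomin Uv hUvinv hUvb)
        rw [eq_top_iff]
        intro y _
        have : (y : V) ∈ Uv := by rw [hUvMo]; exact y.2
        obtain ⟨z, hz, hzy⟩ := this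
        rw [← (Subtype.ext hzy : z = y)]
        exact hz
    have hcharM : ∀ m : ℕ, m ≤ Module.finrank E ↥Mo → (m : E) = 0 → m = 0 := by
      intro m hm
      exact hcharN m (le_trans hm (Submodule.finrank_le Mo))
    have htriv : ∀ (g : G) (x : Mo), ρM g x = x :=
      fun g x => key ρM (fun g' => resRep_unip ρ Mo hMoinv hunip g') hcharM hirrM g x
    obtain ⟨y, hyM, hy0⟩ := (Submodule.ne_bot_iff Mo).mp hMone
    refine ⟨y, hy0, fun g => ?_⟩
    have h := congrArg Subtype.val (htriv g ⟨y, hyM⟩)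
    rwa [hρM, resRep_coe] at h
end Key
end

section
/- Let K be a field of characteristic 0, A an abelian variety over K, and L an algebraic extension of K. If the set of divisible elements of A(L) is zero (i.e., ∩_{n≥1} nA(L) = 0), then the set of divisible elements of the torsion subgroup A(L)_tor is zero; and the latter condition is equivalent to A(L)[ℓ^∞] being finite for every prime ℓ. -/
/-- A minimal interface for an abelian variety `A` over a field `K` (Mathlib has no
theory of abelian varieties): the functor of points `L ↦ A(L)` on field extensions of
`K`, functorial and injective in `L`, together with the basic geometric fact that the
`n`-torsion of `A(L)` is finite for every `n ≥ 1` (as `A(L)[n] ⊆ A(K̄)[n]` which is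
finite of order `n^{2 dim A}`). -/
structure AbelianVariety (K : Type) [Field K] : Type 1 where
  Point : (L : Type) → [Field L] → [Algebra K L] → AddCommGrpCat.{0}
  map : ∀ {L₁ L₂ : Type} [Field L₁] [Algebra K L₁] [Field L₂] [Algebra K L₂],
    (L₁ →ₐ[K] L₂) → (Point L₁ →+ Point L₂)
  map_injective : ∀ {L₁ L₂ : Type} [Field L₁] [Algebra K L₁] [Field L₂] [Algebra K L₂]
    (f : L₁ →ₐ[K] L₂), Function.Injective (map f)
  torsion_finite : ∀ (L : Type) [Field L] [Algebra K L] (n : ℕ), 0 < n →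
    {x : Point L | n • x = 0}.Finite


open Classical in
lemma aux_exponent {G : Type*} [AddCommGroup G] {S : Set G} (hS : S.Finite) (ℓ : ℕ)
    (h : ∀ s ∈ S, ∃ k : ℕ, ℓ ^ k • s = 0) : ∃ e : ℕ, ∀ s ∈ S, ℓ ^ e • s = 0 := by
  classical
  refine ⟨hS.toFinset.sup (fun s => if h' : ∃ k : ℕ, ℓ ^ k • s = 0 then Nat.find h' else 0),
    fun s hs => ?_⟩
  set e := hS.toFinset.sup (fun s => if h' : ∃ k : ℕ, ℓ ^ k • s = 0 then Nat.find h' else 0)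
  have hex := h s hs
  have hk : ℓ ^ (Nat.find hex) • s = 0 := Nat.find_spec hex
  have hle : Nat.find hex ≤ e := by
    have := Finset.le_sup (f := fun s => if h' : ∃ k : ℕ, ℓ ^ k • s = 0 then Nat.find h' else 0)
      (hS.mem_toFinset.mpr hs)
    simpa [dif_pos hex] using this
  calc (ℓ ^ e) • s = (ℓ ^ (e - Nat.find hex) * ℓ ^ Nat.find hex) • s := by
        rw [← pow_add, Nat.sub_add_cancel hle]
    _ = ℓ ^ (e - Nat.find hex) • (ℓ ^ Nat.find hex • s) := mul_smul _ _ _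
    _ = 0 := by rw [hk, smul_zero]

lemma aux_bwd {G : Type*} [AddCommGroup G]
    (h : ∀ ℓ : ℕ, ℓ.Prime → {x : G | ∃ k : ℕ, ℓ ^ k • x = 0}.Finite) :
    ∀ x : G, (∃ m : ℕ, 0 < m ∧ m • x = 0) →
      (∀ n : ℕ, 0 < n → ∃ y : G, (∃ m' : ℕ, 0 < m' ∧ m' • y = 0) ∧ n • y = x) → x = 0 := by
  intro x ⟨m, hm, hmx⟩ hdiv
  have hfin : IsOfFinAddOrder x := by
    rw [isOfFinAddOrder_iff_nsmul_eq_zero]; exact ⟨m, hm, hmx⟩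
  rw [← AddMonoid.addOrderOf_eq_one_iff]
  by_contra hne
  obtain ⟨ℓ, hℓ, hdvd⟩ := Nat.exists_prime_and_dvd hne
  -- get an exponent bound for the ℓ-primary part
  obtain ⟨e, he⟩ := aux_exponent (h ℓ hℓ) ℓ (fun s hs => hs)
  obtain ⟨y, ⟨m', hm', hm'y⟩, hy⟩ := hdiv (ℓ ^ e) (pow_pos hℓ.pos e)
  set c : ℕ := m' / ℓ ^ (m'.factorization ℓ) with hc
  have hm'ne : m' ≠ 0 := hm'.ne'
  have hsplit : ℓ ^ (m'.factorization ℓ) * c = m' := Nat.ordProj_mul_ordCompl_eq_self m' ℓ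
  have hcy : (c • y) ∈ {x : G | ∃ k : ℕ, ℓ ^ k • x = 0} := by
    refine ⟨m'.factorization ℓ, ?_⟩
    rw [← mul_smul, hsplit, hm'y]
  have hcx : c • x = 0 := by
    rw [← hy, ← mul_smul, mul_comm, mul_smul]
    exact he _ hcy
  have hxc : addOrderOf x ∣ c := addOrderOf_dvd_of_nsmul_eq_zero hcx
  have : ℓ ∣ c := hdvd.trans hxc
  exact Nat.not_dvd_ordCompl hℓ hm'ne this

lemma aux_fwd {G : Type*} [AddCommGroup G]
    (hfin : ∀ n : ℕ, 0 < n → {x : G | n • x = 0}.Finite)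
    (h : ∀ x : G, (∃ m : ℕ, 0 < m ∧ m • x = 0) →
      (∀ n : ℕ, 0 < n → ∃ y : G, (∃ m' : ℕ, 0 < m' ∧ m' • y = 0) ∧ n • y = x) → x = 0)
    (ℓ : ℕ) (hℓ : ℓ.Prime) : {x : G | ∃ k : ℕ, ℓ ^ k • x = 0}.Finite := by
  classical
  set S : Set G := {x : G | ∃ k : ℕ, ℓ ^ k • x = 0} with hSdef
  by_contra hS
  rw [← Set.not_infinite, not_not] at hS
  -- For each k, there is a nonzero element of `G[ℓ]` that is `ℓ^k`-divisible within `S`.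
  have key : ∀ k : ℕ, ∃ z : G, ℓ • z = 0 ∧ z ≠ 0 ∧ ∃ y ∈ S, ℓ ^ k • y = z := by
    intro k
    obtain ⟨y, hyS, hyk⟩ : ∃ y ∈ S, ¬ (ℓ ^ k • y = 0) := by
      by_contra hcon
      push_neg at hcon
      exact hS ((hfin (ℓ ^ k) (pow_pos hℓ.pos k)).subset hcon)
    have hyex : ∃ k' : ℕ, ℓ ^ k' • y = 0 := hyS
    set b := Nat.find hyex with hb
    have hby : ℓ ^ b • y = 0 := Nat.find_spec hyex
    have hkb : k < b := by
      by_contra hle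
      push_neg at hle
      apply hyk
      calc (ℓ ^ k) • y = (ℓ ^ (k - b) * ℓ ^ b) • y := by
            rw [← pow_add, Nat.sub_add_cancel hle]
        _ = ℓ ^ (k - b) • (ℓ ^ b • y) := mul_smul _ _ _
        _ = 0 := by rw [hby, smul_zero]
    have hb1 : b - 1 < b := Nat.sub_lt (Nat.lt_of_le_of_lt (Nat.zero_le k) hkb) one_pos
    refine ⟨ℓ ^ (b - 1) • y, ?_, Nat.find_min hyex hb1, ℓ ^ (b - 1 - k) • y, ?_, ?_⟩
    · have hpow : ℓ * ℓ ^ (b - 1) = ℓ ^ b := by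
        rw [← pow_succ']
        congr 1
        omega
      rw [← mul_smul, hpow, hby]
    · exact ⟨b, by rw [← mul_smul, mul_comm, mul_smul, hby, smul_zero]⟩
    · rw [← mul_smul, ← pow_add, Nat.add_sub_cancel' (Nat.le_sub_one_of_lt hkb)]
  -- choose such elements; they live in the finite set `G[ℓ]`, so one recurs infinitely often
  have hfinℓ : Finite {z : G // ℓ • z = 0} := (hfin ℓ hℓ.pos).to_subtype
  obtain ⟨z0, hz0⟩ := Finite.exists_infinite_fiber
    (fun k : ℕ => (⟨(key k).choose, ((key k).choose_spec).1⟩ : {z : G // ℓ • z = 0}))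
  rw [Set.infinite_coe_iff] at hz0
  have hz0mem : ∀ k : ℕ, ∃ j, k < j ∧ (key j).choose = (z0 : G) := by
    intro k
    obtain ⟨j, hj, hjk⟩ := hz0.exists_gt k
    refine ⟨j, hjk, ?_⟩
    have h' : (⟨(key j).choose, ((key j).choose_spec).1⟩ : {z : G // ℓ • z = 0}) = z0 := hj
    exact congrArg Subtype.val h'
  obtain ⟨j0, _, hj0⟩ := hz0mem 0
  have hz0ne : (z0 : G) ≠ 0 := by rw [← hj0]; exact ((key j0).choose_spec).2.1
  -- z0 is a nonzero divisible element of the torsion subgroup; contradiction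
  apply hz0ne
  apply h
  · exact ⟨ℓ, hℓ.pos, z0.2⟩
  · intro n hn
    set a := n.factorization ℓ with ha
    set c := n / ℓ ^ a with hc
    have hsplit : ℓ ^ a * c = n := Nat.ordProj_mul_ordCompl_eq_self n ℓ
    have hcℓ : ¬ ℓ ∣ c := Nat.not_dvd_ordCompl hℓ hn.ne'
    obtain ⟨j, hja, hjz⟩ := hz0mem a
    obtain ⟨y, hyS, hyj⟩ : ∃ y ∈ S, ℓ ^ j • y = (z0 : G) := by
      have h' := ((key j).choose_spec).2.2
      rw [hjz] at h'
      exact h'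
    set y' : G := ℓ ^ (j - a) • y with hy'
    have hy'z : ℓ ^ a • y' = (z0 : G) := by
      rw [hy', ← mul_smul, ← pow_add, Nat.add_sub_cancel' hja.le]
      exact hyj
    obtain ⟨b, hby⟩ := hyS
    have hb1y : ℓ ^ (b + 1) • y = 0 := by rw [pow_succ', mul_smul, hby, smul_zero]
    have hby' : ℓ ^ (b + 1) • y' = 0 := by
      rw [hy', ← mul_smul, mul_comm, mul_smul, hb1y, smul_zero]
    have hcop : Nat.Coprime c (ℓ ^ (b + 1)) :=
      (Nat.Prime.coprime_iff_not_dvd hℓ).mpr hcℓ |>.symm.pow_right _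
    have h1lt : 1 < ℓ ^ (b + 1) := Nat.one_lt_pow (Nat.succ_ne_zero b) hℓ.one_lt
    obtain ⟨u, -, hu⟩ := Nat.exists_mul_mod_eq_one_of_coprime hcop h1lt
    have hcu : c * u = ℓ ^ (b + 1) * (c * u / ℓ ^ (b + 1)) + 1 := by
      conv_lhs => rw [← Nat.div_add_mod (c * u) (ℓ ^ (b + 1))]
      rw [hu]
    refine ⟨u • y', ⟨ℓ ^ (b + 1), pow_pos hℓ.pos _, ?_⟩, ?_⟩
    · rw [← mul_smul, mul_comm, mul_smul, hby', smul_zero]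
    · have hnu : n * u = ℓ ^ a * (c * u) := by rw [← hsplit, mul_assoc]
      calc n • (u • y') = (n * u) • y' := (mul_smul n u y').symm
        _ = (ℓ ^ a * (c * u)) • y' := by rw [hnu]
        _ = ℓ ^ a • ((c * u) • y') := mul_smul _ _ _
        _ = ℓ ^ a • ((ℓ ^ (b + 1) * (c * u / ℓ ^ (b + 1))) • y' + 1 • y') := by
            rw [← add_smul, ← hcu]
        _ = ℓ ^ a • y' := by
            rw [mul_comm (ℓ ^ (b + 1)), mul_smul, hby', smul_zero, zero_add, one_smul]
        _ = (z0 : G) := hy'z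

/-- Let `K` be a field of characteristic `0`, `A` an abelian variety
over `K`, and `L` an algebraic extension of `K`.  If the set of divisible elements of
`A(L)` is zero, then the set of divisible elements of the torsion subgroup `A(L)_tor`
is zero; and the latter condition is equivalent to `A(L)[ℓ^∞]` being finite for every
prime `ℓ`. -/
theorem stmt13 (K : Type) [Field K] [CharZero K] (A : AbelianVariety K)
    (L : Type) [Field L] [Algebra K L] [Algebra.IsAlgebraic K L] :
    ((∀ x : A.Point L, (∀ n : ℕ, 0 < n → ∃ y : A.Point L, n • y = x) → x = 0) →
      (∀ x : A.Point L, (∃ m : ℕ, 0 < m ∧ m • x = 0) →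
        (∀ n : ℕ, 0 < n → ∃ y : A.Point L,
          (∃ m' : ℕ, 0 < m' ∧ m' • y = 0) ∧ n • y = x) → x = 0)) ∧
    ((∀ x : A.Point L, (∃ m : ℕ, 0 < m ∧ m • x = 0) →
        (∀ n : ℕ, 0 < n → ∃ y : A.Point L,
          (∃ m' : ℕ, 0 < m' ∧ m' • y = 0) ∧ n • y = x) → x = 0) ↔
      (∀ ℓ : ℕ, ℓ.Prime → {x : A.Point L | ∃ k : ℕ, ℓ ^ k • x = 0}.Finite)) := by
  
  constructor
  · intro hyp x _hx hdiv
    apply hyp x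
    intro n hn
    obtain ⟨y, _, hy⟩ := hdiv n hn
    exact ⟨y, hy⟩
  · constructor
    · intro hyp ℓ hℓ
      exact aux_fwd (A.torsion_finite L) hyp ℓ hℓ
    · intro hyp
      exact aux_bwd hyp
end

section
/- Let K be a field of characteristic 0 containing all roots of unity, L a Galois extension of K, and assume K is stably p-×μ-indivisible for a prime p. Then L_div ⊆ L, i.e., for every finite extension E of L, every divisible element of E^× already lies in L. -/
open Polynomial IntermediateField

namespace Stmt16Aux

variable {K : Type} [Field K] [CharZero K]

local notation "Kb" => AlgebraicClosure K

lemma isAlgIF (F' : IntermediateField K Kb) : Algebra.IsAlgebraic ↥F' Kb :=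
  Algebra.IsAlgebraic.tower_top (K := K) ↥F'

lemma isIntIF (F' : IntermediateField K Kb) (r : Kb) : IsIntegral ↥F' r := by
  haveI := isAlgIF F'
  haveI : Algebra.IsIntegral ↥F' Kb := Algebra.IsAlgebraic.isIntegral
  exact Algebra.IsIntegral.isIntegral r

/-- An element of `Kb` fixed by every automorphism over an intermediate field lies in it. -/
lemma fixMem (F' : IntermediateField K Kb) (r : Kb)
    (h : ∀ τ : Kb ≃ₐ[↥F'] Kb, τ r = r) : r ∈ F' := by
  by_contra hr
  haveI := isAlgIF F'
  haveI : CharZero ↥F' := (algebraMap ↥F' Kb).charZero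
  have hint : IsIntegral ↥F' r := isIntIF F' r
  have hq2 : 2 ≤ (minpoly ↥F' r).natDegree := by
    rw [minpoly.two_le_natDegree_iff hint]
    rintro ⟨a, ha⟩
    exact hr (ha ▸ a.2)
  have hsep : (minpoly ↥F' r).Separable := (minpoly.irreducible hint).separable
  set Q := (minpoly ↥F' r).map (algebraMap ↥F' Kb) with hQdef
  have hQ0 : Q ≠ 0 := Polynomial.map_ne_zero (minpoly.ne_zero hint)
  have hrroot : r ∈ Q.roots := by
    rw [Polynomial.mem_roots hQ0]
    show Polynomial.eval r Q = 0
    rw [hQdef, Polynomial.eval_map, ← Polynomial.aeval_def]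
    exact minpoly.aeval ↥F' r
  have hnodup : Q.roots.Nodup :=
    Polynomial.nodup_roots (Polynomial.Separable.map hsep)
  have hcard : (minpoly ↥F' r).natDegree = Q.roots.card :=
    (Polynomial.natDegree_map _).symm.trans (IsAlgClosed.splits Q).natDegree_eq_card_roots
  have hex : ∃ w ∈ Q.roots, w ≠ r := by
    by_contra hc
    push_neg at hc
    classical
    have hcount : Multiset.count r Q.roots = Multiset.card Q.roots :=
      Multiset.count_eq_card.mpr (fun w hw => (hc w hw).symm)
    have hle1 : Multiset.count r Q.roots ≤ 1 :=
      Multiset.nodup_iff_count_le_one.mp hnodup r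
    omega
  obtain ⟨w, hwroot, hwr⟩ := hex
  have haeval : (Polynomial.aeval w) (minpoly ↥F' r) = 0 := by
    have hw := (Polynomial.mem_roots hQ0).mp hwroot
    rw [Polynomial.IsRoot, hQdef, Polynomial.eval_map, ← Polynomial.aeval_def] at hw
    exact hw
  obtain ⟨φ, hφ⟩ := IntermediateField.exists_algHom_of_splits_of_aeval
      (fun s => ⟨isIntIF F' s, IsAlgClosed.splits _⟩) haeval
  have hbij : Function.Bijective φ := Algebra.IsAlgebraic.algHom_bijective φ
  have := h (AlgEquiv.ofBijective φ hbij)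
  exact hwr (by rw [← this]; exact hφ.symm ▸ rfl)

/-- A `K`-automorphism of `Kb` maps a normal intermediate field into itself. -/
lemma memNormal (F' : IntermediateField K Kb) [Normal K ↥F'] (g : Kb ≃ₐ[K] Kb)
    {y : Kb} (hy : y ∈ F') : g y ∈ F' := by
  have hcomm := AlgEquiv.restrictNormal_commutes g ↥F' ⟨y, hy⟩
  have heq : algebraMap ↥F' Kb (⟨y, hy⟩ : ↥F') = y := rfl
  rw [heq] at hcomm
  rw [← hcomm]
  exact SetLike.coe_mem _

lemma fixSup {A B : IntermediateField K Kb} {c : Kb ≃ₐ[K] Kb}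
    (hA : ∀ y ∈ A, c y = y) (hB : ∀ y ∈ B, c y = y) {z : Kb} (hz : z ∈ A ⊔ B) :
    c z = z := by
  rw [IntermediateField.sup_def] at hz
  induction hz using IntermediateField.adjoin_induction with
  | mem t ht => rcases ht with ht | ht
                · exact hA t ht
                · exact hB t ht
  | algebraMap t => exact c.commutes t
  | add a b ha hb iha ihb => rw [map_add, iha, ihb]
  | inv a ha iha => rw [map_inv₀, iha]
  | mul a b ha hb iha ihb => rw [map_mul, iha, ihb]

variable (p : ℕ)

set_option maxHeartbeats 1000000 in
theorem main (hp : p.Prime)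
    (hroots : ∀ ζ : Kb, (∃ n : ℕ, 0 < n ∧ ζ ^ n = 1) → ζ ∈ (algebraMap K Kb).range)
    (hstable : ∀ E : IntermediateField K Kb, FiniteDimensional K ↥E →
      ∀ x : Kb, x ∈ E → x ≠ 0 →
        (∀ n : ℕ, ∃ y ∈ E, y ^ p ^ n = x) → ∃ m : ℕ, 0 < m ∧ x ^ m = 1)
    (L : IntermediateField K Kb) (hGal : IsGalois K ↥L) :
    ∀ E : IntermediateField ↥L Kb, FiniteDimensional ↥L ↥E →
      ∀ x : Kb, x ∈ E → x ≠ 0 →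
        (∀ n : ℕ, 0 < n → ∃ y ∈ E, y ^ n = x) → x ∈ L := by
  classical
  intro E hE x hxE hx0 hdiv
  haveI := hGal
  haveI := hE
  haveI : IsAlgClosure ↥L Kb := ⟨inferInstance, isAlgIF L⟩
  set E' : IntermediateField ↥L Kb := normalClosure ↥L ↥E Kb with hE'def
  haveI : FiniteDimensional ↥L ↥E' := normalClosure.is_finiteDimensional ↥L ↥E Kb
  haveI : Normal ↥L ↥E' := normalClosure.normal ↥L ↥E Kb
  have hEE' : E ≤ E' := IntermediateField.le_normalClosure E
  set xh : ↥E' := ⟨x, hEE' hxE⟩ with hxh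
  have hxh0 : xh ≠ 0 := by
    intro h
    exact hx0 (by rw [hxh] at h; exact congrArg Subtype.val h)
  have hdiv' : ∀ n : ℕ, 0 < n → ∃ yh : ↥E', yh ^ n = xh := by
    intro n hn
    obtain ⟨y, hyE, hyx⟩ := hdiv n hn
    refine ⟨⟨y, hEE' hyE⟩, ?_⟩
    apply Subtype.ext
    push_cast
    exact hyx
  haveI : Nonempty (↥E' ≃ₐ[↥L] ↥E') := ⟨1⟩
  set g := Fintype.card (↥E' ≃ₐ[↥L] ↥E') with hgdef
  have hgpos : 0 < g := Fintype.card_pos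
  set Nh : ↥E' := ∏ σ : ↥E' ≃ₐ[↥L] ↥E', σ xh with hNh
  have hNh0 : Nh ≠ 0 := by
    rw [hNh]
    apply Finset.prod_ne_zero_iff.mpr
    intro σ _ h
    exact hxh0 (σ.injective (h.trans (map_zero σ).symm))
  have hNfix : ∀ σ : ↥E' ≃ₐ[↥L] ↥E', σ Nh = Nh := by
    intro σ
    rw [hNh, map_prod]
    exact Fintype.prod_equiv (Equiv.mulLeft σ) _ _
      (fun τ => (AlgEquiv.mul_apply σ τ xh).symm)
  set Xh : ↥E' := xh ^ g * Nh⁻¹ with hXh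
  have hXh0 : Xh ≠ 0 := mul_ne_zero (pow_ne_zero _ hxh0) (inv_ne_zero hNh0)
  have hXdiv : ∀ n : ℕ, 0 < n → ∃ Yh : ↥E', Yh ^ n = Xh := by
    intro n hn
    obtain ⟨yh, hyh⟩ := hdiv' n hn
    refine ⟨yh ^ g * (∏ σ : ↥E' ≃ₐ[↥L] ↥E', σ yh)⁻¹, ?_⟩
    have h1 : (∏ σ : ↥E' ≃ₐ[↥L] ↥E', σ yh) ^ n = Nh := by
      rw [← Finset.prod_pow]
      rw [hNh]
      refine Finset.prod_congr rfl (fun σ _ => ?_)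
      rw [← map_pow, hyh]
    rw [mul_pow, ← pow_mul, mul_comm g n, pow_mul, hyh, inv_pow, h1, hXh]
  have hXnorm : ∏ σ : ↥E' ≃ₐ[↥L] ↥E', σ Xh = 1 := by
    have h1 : ∀ σ : ↥E' ≃ₐ[↥L] ↥E', σ Xh = σ xh ^ g * Nh⁻¹ := by
      intro σ
      rw [hXh, map_mul, map_pow, map_inv₀, hNfix σ]
    rw [Finset.prod_congr rfl (fun σ _ => h1 σ), Finset.prod_mul_distrib,
      Finset.prod_pow, ← hNh, Finset.prod_const, Finset.card_univ, ← hgdef,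
      inv_pow, mul_inv_cancel₀ (pow_ne_zero _ hNh0)]
  set X : Kb := (Xh : Kb) with hXdef
  have hX0 : X ≠ 0 := fun h => hXh0 (Subtype.ext h)
  have hNL : (Nh : Kb) ∈ L := by
    apply fixMem
    intro τ
    have hcomm := AlgEquiv.restrictNormal_commutes τ ↥E' Nh
    have h2 : (τ.restrictNormal ↥E') Nh = Nh := hNfix _
    rw [h2] at hcomm
    exact hcomm.symm
  -- CORE : X is a root of unity
  have hcore : ∃ c : ℕ, 0 < c ∧ X ^ c = 1 := by
    haveI : Algebra.IsIntegral K Kb := Algebra.IsAlgebraic.isIntegral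
    have hXint : IsIntegral K X := Algebra.IsIntegral.isIntegral X
    haveI : FiniteDimensional K ↥K⟮X⟯ := IntermediateField.adjoin.finiteDimensional hXint
    set F : IntermediateField K Kb := normalClosure K ↥K⟮X⟯ Kb with hF
    haveI hFfd : FiniteDimensional K ↥F := normalClosure.is_finiteDimensional K ↥K⟮X⟯ Kb
    haveI : Normal K ↥F := normalClosure.normal K ↥K⟮X⟯ Kb
    have hXF : X ∈ F := IntermediateField.le_normalClosure K⟮X⟯
      (IntermediateField.mem_adjoin_simple_self K X)
    set M : IntermediateField K Kb := L ⊔ F with hM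
    have hLM : L ≤ M := le_sup_left
    have hFM : F ≤ M := le_sup_right
    have hXM : X ∈ M := hFM hXF
    set D := Module.finrank ↥L ↥E' with hD
    have hDpos : 0 < D := Module.finrank_pos
    have key : ∀ k : ℕ, ∃ yF ∈ F, yF ^ p ^ k = X ^ (Nat.factorial D * g) := by
      intro k
      obtain ⟨rh, hrh⟩ := hXdiv (p ^ k) (pow_pos hp.pos k)
      set r : Kb := (rh : Kb) with hrdef
      have hr : r ^ p ^ k = X := by
        have h0 := congrArg (Subtype.val : ↥E' → Kb) hrh
        push_cast at h0
        exact h0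
      have hrintM : IsIntegral ↥M r := isIntIF M r
      set q := minpoly ↥M r with hqdef
      set n := q.natDegree with hn
      have hn1 : 0 < n := minpoly.natDegree_pos hrintM
      have hrintL : IsIntegral ↥L r := by
        haveI : Algebra.IsIntegral ↥L Kb := Algebra.IsAlgebraic.isIntegral
        exact Algebra.IsIntegral.isIntegral r
      have hnD : n ≤ D := by
        have hincl : (algebraMap ↥M Kb).comp (IntermediateField.inclusion hLM).toRingHom
            = algebraMap ↥L Kb := RingHom.ext (fun a => rfl)
        have hdvd : q ∣ (minpoly ↥L r).map (IntermediateField.inclusion hLM).toRingHom := by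
          apply minpoly.dvd
          rw [Polynomial.aeval_def, Polynomial.eval₂_map, hincl, ← Polynomial.aeval_def]
          exact minpoly.aeval ↥L r
        have hne : (minpoly ↥L r).map (IntermediateField.inclusion hLM).toRingHom ≠ 0 :=
          Polynomial.map_ne_zero (minpoly.ne_zero hrintL)
        have h1 := Polynomial.natDegree_le_of_dvd hdvd hne
        have h2 : ((minpoly ↥L r).map (IntermediateField.inclusion hLM).toRingHom).natDegree
            = (minpoly ↥L r).natDegree :=
          Polynomial.natDegree_map_eq_of_injective (RingHom.injective _) _
        have h3 : (minpoly ↥L r).natDegree ≤ D := by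
          have heq := minpoly.algebraMap_eq (A := ↥L) (algebraMap ↥E' Kb).injective rh
          have hcoe : algebraMap ↥E' Kb rh = r := rfl
          rw [hcoe] at heq
          rw [heq, hD]
          exact minpoly.natDegree_le _
        omega
      have hndvd : n ∣ Nat.factorial D := Nat.dvd_factorial hn1 hnD
      set Q := q.map (algebraMap ↥M Kb) with hQd
      have hQmonic : Q.Monic := (minpoly.monic hrintM).map _
      have hroot_pow : ∀ w ∈ Q.roots, w ^ p ^ k = X := by
        intro w hw
        have hdvd : q ∣ (Polynomial.X ^ p ^ k - Polynomial.C (⟨X, hXM⟩ : ↥M)) := by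
          apply minpoly.dvd
          rw [map_sub, map_pow, Polynomial.aeval_X, Polynomial.aeval_C]
          have hc : algebraMap ↥M Kb (⟨X, hXM⟩ : ↥M) = X := rfl
          rw [hc, hr, sub_self]
        have hdvd2 : Q ∣ (Polynomial.X ^ p ^ k
            - Polynomial.C (⟨X, hXM⟩ : ↥M)).map (algebraMap ↥M Kb) :=
          Polynomial.map_dvd _ hdvd
        have hmap : (Polynomial.X ^ p ^ k
            - Polynomial.C (⟨X, hXM⟩ : ↥M)).map (algebraMap ↥M Kb)
            = Polynomial.X ^ p ^ k - Polynomial.C X := by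
          rw [Polynomial.map_sub, Polynomial.map_pow, Polynomial.map_X, Polynomial.map_C]
          rfl
        rw [hmap] at hdvd2
        obtain ⟨u, hu⟩ := hdvd2
        have hevalQ : Polynomial.eval w Q = 0 := (Polynomial.mem_roots hQmonic.ne_zero).mp hw
        have heval2 : Polynomial.eval w (Polynomial.X ^ p ^ k - Polynomial.C X) = 0 := by
          rw [hu, Polynomial.eval_mul, hevalQ, zero_mul]
        rw [Polynomial.eval_sub, Polynomial.eval_pow, Polynomial.eval_X, Polynomial.eval_C,
          sub_eq_zero] at heval2
        exact heval2
      set s' := Q.roots.prod with hs'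
      have hcardQ : Multiset.card Q.roots = n := by
        have h4 := (IsAlgClosed.splits Q).natDegree_eq_card_roots
        rw [hn, hQd]
        exact h4.symm.trans (Polynomial.natDegree_map _)
      have hs'pow : s' ^ p ^ k = X ^ n := by
        have h1 : (Q.roots.map (fun w => w ^ p ^ k)).prod = s' ^ p ^ k := by
          rw [hs']
          have h2 := Multiset.prod_hom Q.roots (powMonoidHom (p ^ k) : Kb →* Kb)
          simpa [powMonoidHom_apply] using h2
        have h2 : Q.roots.map (fun w => w ^ p ^ k) = Q.roots.map (fun _ => X) :=
          Multiset.map_congr rfl hroot_pow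
        rw [← h1, h2, Multiset.map_const', Multiset.prod_replicate, hcardQ]
      have hs'M : s' ∈ M := by
        have hsplits : Q.Splits := IsAlgClosed.splits Q
        have hco := hsplits.coeff_zero_eq_prod_roots_of_monic hQmonic
        have hsign : ((-1 : Kb) ^ Q.natDegree) * ((-1 : Kb) ^ Q.natDegree) = 1 := by
          rw [← mul_pow]
          norm_num
        have hval : s' = (-1 : Kb) ^ Q.natDegree * Q.coeff 0 := by
          rw [hco, ← mul_assoc, hsign, one_mul, hs']
        have hc0 : Q.coeff 0 = algebraMap ↥M Kb (q.coeff 0) := by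
          rw [hQd, Polynomial.coeff_map]
        rw [hval, hc0]
        exact mul_mem (pow_mem (neg_mem (one_mem M)) _) (q.coeff 0).2
      set s : Kb := s' ^ (Nat.factorial D / n) with hsdef
      have hsM : s ∈ M := pow_mem hs'M _
      have hspow : s ^ p ^ k = X ^ Nat.factorial D := by
        rw [hsdef, ← pow_mul, mul_comm (Nat.factorial D / n) (p ^ k), pow_mul, hs'pow,
          ← pow_mul, Nat.mul_div_cancel' hndvd]
      have hs0 : s ≠ 0 := by
        intro h0
        apply pow_ne_zero (Nat.factorial D) hX0
        rw [← hspow, h0, zero_pow (pow_pos hp.pos k).ne']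
      set lift : (↥E' ≃ₐ[↥L] ↥E') → (Kb ≃ₐ[↥L] Kb) :=
        fun σ => AlgEquiv.liftNormal σ Kb with hliftdef
      have hliftc : ∀ (σ : ↥E' ≃ₐ[↥L] ↥E') (z : ↥E'),
          lift σ (z : Kb) = ((σ z : ↥E') : Kb) := by
        intro σ z
        have h5 := AlgEquiv.liftNormal_commutes σ Kb z
        simpa using h5
      set r₀ : Kb := ∏ σ : ↥E' ≃ₐ[↥L] ↥E', (s * (lift σ s)⁻¹) with hr₀
      have hprod1 : ∏ σ : ↥E' ≃ₐ[↥L] ↥E', lift σ X = 1 := by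
        have h5 : ∀ σ : ↥E' ≃ₐ[↥L] ↥E', lift σ X = algebraMap ↥E' Kb (σ Xh) :=
          fun σ => hliftc σ Xh
        rw [Finset.prod_congr rfl (fun σ _ => h5 σ), ← map_prod, hXnorm, map_one]
      have hr₀pow : r₀ ^ p ^ k = X ^ (Nat.factorial D * g) := by
        rw [hr₀, ← Finset.prod_pow]
        have h1 : ∀ σ : ↥E' ≃ₐ[↥L] ↥E',
            (s * (lift σ s)⁻¹) ^ p ^ k
              = X ^ Nat.factorial D * ((lift σ) (X ^ Nat.factorial D))⁻¹ := by
          intro σ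
          rw [mul_pow, inv_pow, ← map_pow, hspow]
        rw [Finset.prod_congr rfl (fun σ _ => h1 σ), Finset.prod_mul_distrib,
          Finset.prod_const, Finset.card_univ, Finset.prod_inv_distrib]
        have h2 : (∏ σ : ↥E' ≃ₐ[↥L] ↥E', lift σ (X ^ Nat.factorial D))
            = (∏ σ : ↥E' ≃ₐ[↥L] ↥E', lift σ X) ^ Nat.factorial D := by
          rw [← Finset.prod_pow]
          exact Finset.prod_congr rfl (fun σ _ => map_pow _ _ _)
        rw [h2, hprod1, one_pow, inv_one, mul_one, ← pow_mul, ← hgdef]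
      have hfixF : ∀ τ : Kb ≃ₐ[↥F] Kb, τ r₀ = r₀ := by
        intro τ
        set τ0 : Kb ≃ₐ[K] Kb := τ.restrictScalars K with hτ0
        have hτF : ∀ y ∈ F, τ0 y = y := by
          intro y hy
          have h6 := τ.commutes (⟨y, hy⟩ : ↥F)
          exact h6
        have hτFinv : ∀ y ∈ F, τ0.symm y = y := by
          intro y hy
          have h6 := hτF y hy
          calc τ0.symm y = τ0.symm (τ0 y) := by rw [h6]
            _ = y := τ0.symm_apply_apply y
        rw [hr₀, map_prod]
        refine Finset.prod_congr rfl (fun σ _ => ?_)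
        set σt : Kb ≃ₐ[K] Kb := (lift σ).restrictScalars K with hσt
        have hσL : ∀ y ∈ L, σt y = y := by
          intro y hy
          have h6 := (lift σ).commutes (⟨y, hy⟩ : ↥L)
          exact h6
        have hσLinv : ∀ y ∈ L, σt.symm y = y := by
          intro y hy
          have h6 := hσL y hy
          calc σt.symm y = σt.symm (σt y) := by rw [h6]
            _ = y := σt.symm_apply_apply y
        set c : Kb ≃ₐ[K] Kb := σt.trans (τ0.trans (σt.symm.trans τ0.symm)) with hcdef
        have hcapp : ∀ z, c z = τ0.symm (σt.symm (τ0 (σt z))) := fun z => rfl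
        have hcL : ∀ y ∈ L, c y = y := by
          intro y hy
          rw [hcapp, hσL y hy]
          have h7 : τ0 y ∈ L := memNormal L τ0 hy
          rw [hσLinv _ h7, τ0.symm_apply_apply]
        have hcF : ∀ y ∈ F, c y = y := by
          intro y hy
          rw [hcapp]
          have h7 : σt y ∈ F := memNormal F σt hy
          rw [hτF _ h7, σt.symm_apply_apply, hτFinv _ hy]
        have hcs : c s = s := fixSup hcL hcF (hM ▸ hsM)
        have hcomm : τ0 (σt s) = σt (τ0 s) := by
          have h8 := congrArg (fun z => σt (τ0 z)) hcs
          simp only [hcapp] at h8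
          rw [τ0.apply_symm_apply, σt.apply_symm_apply] at h8
          exact h8
        set ω : Kb := τ0 s * s⁻¹ with hω
        have hωpow : ω ^ p ^ k = 1 := by
          rw [hω, mul_pow, inv_pow, ← map_pow, hspow]
          have h9 : τ0 (X ^ Nat.factorial D) = X ^ Nat.factorial D := by
            rw [map_pow, hτF X hXF]
          rw [h9, mul_inv_cancel₀ (pow_ne_zero _ hX0)]
        have hω0 : ω ≠ 0 := by
          intro h0
          rw [h0, zero_pow (pow_pos hp.pos k).ne'] at hωpow
          exact zero_ne_one hωpow
        obtain ⟨w, hwK⟩ := hroots ω ⟨p ^ k, pow_pos hp.pos k, hωpow⟩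
        have hτs : τ0 s = ω * s := by
          rw [hω]
          field_simp
        have hσω : σt ω = ω := by
          rw [← hwK]
          exact σt.commutes w
        calc τ (s * (lift σ s)⁻¹) = τ0 s * (τ0 (σt s))⁻¹ := by
              rw [map_mul, map_inv₀]; rfl
          _ = (ω * s) * (σt (ω * s))⁻¹ := by rw [hτs, hcomm, hτs]
          _ = (ω * s) * (ω * σt s)⁻¹ := by rw [map_mul, hσω]
          _ = (ω * ω⁻¹) * (s * (σt s)⁻¹) := by rw [mul_inv]; ring
          _ = s * (σt s)⁻¹ := by rw [mul_inv_cancel₀ hω0, one_mul]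
          _ = s * (lift σ s)⁻¹ := rfl
      have hr₀F : r₀ ∈ F := fixMem F r₀ hfixF
      exact ⟨r₀, hr₀F, hr₀pow⟩
    obtain ⟨m, hm, hXm⟩ := hstable F hFfd (X ^ (Nat.factorial D * g))
      (pow_mem hXF _) (pow_ne_zero _ hX0) key
    refine ⟨Nat.factorial D * g * m, by positivity, ?_⟩
    rw [pow_mul, hXm]
  -- FINISH
  obtain ⟨c1, hc1pos, hXc⟩ := hcore
  set d := Module.finrank ↥L ↥E with hd
  have hdpos : 0 < d := Module.finrank_pos
  obtain ⟨y₁, hy₁E, hy₁x⟩ := hdiv (Nat.factorial d) (Nat.factorial_pos d)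
  have hy₁0 : y₁ ≠ 0 := by
    intro h
    exact hx0 (by rw [← hy₁x, h, zero_pow (Nat.factorial_ne_zero d)])
  have hNco : (Nh : Kb) ≠ 0 := fun h => hNh0 (Subtype.ext h)
  have hxg : x ^ g = X * (Nh : Kb) := by
    have h1 : Xh * Nh = xh ^ g := by
      rw [hXh, mul_assoc, inv_mul_cancel₀ hNh0, mul_one]
    have h2 := congrArg (Subtype.val : ↥E' → Kb) h1
    push_cast at h2
    rw [hXdef]
    exact h2.symm
  have hratio : ∀ τ : Kb ≃ₐ[↥L] Kb, (τ x * x⁻¹) ^ (g * c1) = 1 := by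
    intro τ
    have hτN : τ (Nh : Kb) = (Nh : Kb) := by
      have := τ.commutes (⟨(Nh : Kb), hNL⟩ : ↥L)
      simpa using this
    have h1 : (τ x * x⁻¹) ^ g = τ X * X⁻¹ := by
      have h2 : (τ x) ^ g = τ X * (Nh : Kb) := by
        rw [← map_pow, hxg, map_mul, hτN]
      have h4 : (x ^ g)⁻¹ = X⁻¹ * ((Nh : Kb))⁻¹ := by rw [hxg, mul_inv]
      rw [mul_pow, inv_pow, h2, h4, mul_mul_mul_comm, mul_inv_cancel₀ hNco, mul_one]
    have h3 : (τ X) ^ c1 = 1 := by rw [← map_pow, hXc, map_one]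
    rw [pow_mul, h1, mul_pow, h3, inv_pow, hXc, inv_one, mul_one]
  have hζ : ∀ τ : Kb ≃ₐ[↥L] Kb, (τ y₁ * y₁⁻¹) ∈ (algebraMap K Kb).range := by
    intro τ
    apply hroots
    refine ⟨Nat.factorial d * (g * c1), by positivity, ?_⟩
    have h1 : (τ y₁ * y₁⁻¹) ^ Nat.factorial d = τ x * x⁻¹ := by
      rw [mul_pow, ← map_pow, inv_pow, hy₁x]
    rw [pow_mul, h1, hratio τ]
  have hy₁0' : ∀ τ : Kb ≃ₐ[↥L] Kb, τ y₁ * y₁⁻¹ ≠ 0 := by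
    intro τ
    refine mul_ne_zero (fun h => hy₁0 ?_) (inv_ne_zero hy₁0)
    exact τ.injective (h.trans (map_zero τ).symm)
  have hKfix : ∀ (τ : Kb ≃ₐ[↥L] Kb) (w : K), τ (algebraMap K Kb w) = algebraMap K Kb w := by
    intro τ w
    rw [IsScalarTower.algebraMap_apply K ↥L Kb w]
    exact τ.commutes _
  let φ : (Kb ≃ₐ[↥L] Kb) →* Kbˣ :=
    { toFun := fun τ => Units.mk0 (τ y₁ * y₁⁻¹) (hy₁0' τ)
      map_one' := by
        apply Units.ext
        show (1 : Kb ≃ₐ[↥L] Kb) y₁ * y₁⁻¹ = 1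
        simp [mul_inv_cancel₀ hy₁0]
      map_mul' := by
        intro σ τ
        apply Units.ext
        show (σ * τ) y₁ * y₁⁻¹ = (σ y₁ * y₁⁻¹) * (τ y₁ * y₁⁻¹)
        obtain ⟨w, hw⟩ := hζ τ
        have hτy : τ y₁ = algebraMap K Kb w * y₁ := by
          rw [hw]
          field_simp
        calc (σ * τ) y₁ * y₁⁻¹ = σ (τ y₁) * y₁⁻¹ := by rw [AlgEquiv.mul_apply]
          _ = (algebraMap K Kb w * σ y₁) * y₁⁻¹ := by rw [hτy, map_mul, hKfix σ w]
          _ = (σ y₁ * y₁⁻¹) * (τ y₁ * y₁⁻¹) := by rw [hw]; ring }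
  set P := (minpoly ↥L y₁).map (algebraMap ↥L Kb) with hPdef
  have hy₁int : IsIntegral ↥L y₁ := by
    haveI : Algebra.IsIntegral ↥L Kb := Algebra.IsAlgebraic.isIntegral
    exact Algebra.IsIntegral.isIntegral y₁
  have hP0 : P ≠ 0 := Polynomial.map_ne_zero (minpoly.ne_zero hy₁int)
  have hPmem : ∀ τ : Kb ≃ₐ[↥L] Kb, τ y₁ ∈ P.roots := by
    intro τ
    rw [Polynomial.mem_roots hP0]
    show Polynomial.eval (τ y₁) P = 0
    rw [hPdef, Polynomial.eval_map, ← Polynomial.aeval_def]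
    have h6 := Polynomial.aeval_algHom_apply τ.toAlgHom y₁ (minpoly ↥L y₁)
    rw [minpoly.aeval, map_zero] at h6
    simpa using h6
  have hrange : ∀ u : φ.range, ((u : Kbˣ) : Kb) * y₁ ∈ P.roots.toFinset := by
    rintro ⟨u, τ, rfl⟩
    rw [Multiset.mem_toFinset]
    have hval : ((φ τ : Kbˣ) : Kb) * y₁ = τ y₁ := by
      show (τ y₁ * y₁⁻¹) * y₁ = τ y₁
      field_simp
    rw [hval]
    exact hPmem τ
  have hinj : Function.Injective
      (fun u : φ.range => (⟨((u : Kbˣ) : Kb) * y₁, hrange u⟩ : {z // z ∈ P.roots.toFinset})) := by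
    intro u v huv
    have h1 : ((u : Kbˣ) : Kb) * y₁ = ((v : Kbˣ) : Kb) * y₁ := congrArg Subtype.val huv
    have h2 : ((u : Kbˣ) : Kb) = ((v : Kbˣ) : Kb) := mul_right_cancel₀ hy₁0 h1
    exact Subtype.ext (Units.ext h2)
  haveI hfinR : Finite ↥φ.range := Finite.of_injective _ hinj
  haveI : Nonempty ↥φ.range := ⟨1⟩
  set m₀ := Nat.card ↥φ.range with hm₀def
  have hm₀pos : 0 < m₀ := Nat.card_pos
  have hm₀le : m₀ ≤ d := by
    have h1 : Nat.card ↥φ.range ≤ Nat.card {z // z ∈ P.roots.toFinset} :=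
      Nat.card_le_card_of_injective _ hinj
    have h2 : Nat.card {z // z ∈ P.roots.toFinset} = P.roots.toFinset.card := by
      rw [Nat.card_eq_fintype_card, Fintype.card_coe]
    have h3 : P.roots.toFinset.card ≤ Multiset.card P.roots := Multiset.toFinset_card_le _
    have h3b : Multiset.card P.roots ≤ P.natDegree := Polynomial.card_roots' P
    have h4 : P.natDegree = (minpoly ↥L y₁).natDegree := by
      rw [hPdef]
      exact Polynomial.natDegree_map_eq_of_injective (algebraMap ↥L Kb).injective _
    have h5 : (minpoly ↥L y₁).natDegree ≤ d := by
      have heq := minpoly.algebraMap_eq (A := ↥L) (algebraMap ↥E Kb).injective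
        (⟨y₁, hy₁E⟩ : ↥E)
      have hcoe : algebraMap ↥E Kb (⟨y₁, hy₁E⟩ : ↥E) = y₁ := rfl
      rw [hcoe] at heq
      rw [heq, hd]
      exact minpoly.natDegree_le _
    omega
  have hm₀dvd : m₀ ∣ Nat.factorial d := Nat.dvd_factorial hm₀pos hm₀le
  have hfixy : ∀ τ : Kb ≃ₐ[↥L] Kb, τ (y₁ ^ Nat.factorial d) = y₁ ^ Nat.factorial d := by
    intro τ
    have hu : (φ τ) ^ m₀ = 1 := by
      have h0 := pow_card_eq_one' (G := ↥φ.range) (x := ⟨φ τ, ⟨τ, rfl⟩⟩)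
      rw [← hm₀def] at h0
      simpa using congrArg Subtype.val h0
    have hpow : (φ τ) ^ Nat.factorial d = 1 := by
      obtain ⟨t, ht⟩ := hm₀dvd
      rw [ht, pow_mul, hu, one_pow]
    have hval : (τ y₁ * y₁⁻¹) ^ Nat.factorial d = 1 := by
      have := congrArg Units.val hpow
      rw [Units.val_pow_eq_pow_val, Units.val_one] at this
      exact this
    calc τ (y₁ ^ Nat.factorial d) = (τ y₁) ^ Nat.factorial d := map_pow τ y₁ _
      _ = ((τ y₁ * y₁⁻¹) * y₁) ^ Nat.factorial d := by
            rw [inv_mul_cancel_right₀ hy₁0]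
      _ = (τ y₁ * y₁⁻¹) ^ Nat.factorial d * y₁ ^ Nat.factorial d := mul_pow _ _ _
      _ = y₁ ^ Nat.factorial d := by rw [hval, one_mul]
  have hmemL : y₁ ^ Nat.factorial d ∈ L := fixMem L _ hfixy
  rwa [hy₁x] at hmemL

end Stmt16Aux

/-- Let `K` be a field of characteristic `0` containing all roots of
unity, `L` a Galois extension of `K` (inside `K̄`), and assume `K` is stably
`p`-`×μ`-indivisible for a prime `p`.  Then `L_div ⊆ L`: for every finite extension `E`
of `L` and every divisible element `x` of `E^×`, already `x ∈ L`. -/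
theorem stmt16 (p : ℕ) (hp : p.Prime) (K : Type) [Field K] [CharZero K]
    (hroots : ∀ ζ : AlgebraicClosure K, (∃ n : ℕ, 0 < n ∧ ζ ^ n = 1) →
      ζ ∈ (algebraMap K (AlgebraicClosure K)).range)
    (hstable : ∀ E : IntermediateField K (AlgebraicClosure K), FiniteDimensional K ↥E →
      ∀ x : AlgebraicClosure K, x ∈ E → x ≠ 0 →
        (∀ n : ℕ, ∃ y ∈ E, y ^ p ^ n = x) → ∃ m : ℕ, 0 < m ∧ x ^ m = 1)
    (L : IntermediateField K (AlgebraicClosure K)) (hGal : IsGalois K ↥L) :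
    ∀ E : IntermediateField ↥L (AlgebraicClosure K), FiniteDimensional ↥L ↥E →
      ∀ x : AlgebraicClosure K, x ∈ E → x ≠ 0 →
        (∀ n : ℕ, 0 < n → ∃ y ∈ E, y ^ n = x) → x ∈ L :=
  Stmt16Aux.main p hp hroots hstable L hGal
end

section
/- Let K be a complete discrete valuation field of residue characteristic 0, write K = k((t)) with k isomorphic to the residue field. Then every root t_n of t (with t_n^n = t for some n ≥ 1) lies in K_div, and every element of the algebraic closure of k (inside an algebraic closure of K) lies in K_div; consequently K_div contains k̄((t))(t^{1/∞}) and K is not TKND. -/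
noncomputable section
namespace Stmt17Aux

open PowerSeries Polynomial

set_option linter.unusedSectionVars false
set_option maxHeartbeats 1000000
set_option synthInstance.maxHeartbeats 100000

section General

variable {k : Type} [Field k] [CharZero k]

/-- Cauchy limits of coefficientwise-stabilizing sequences of power series. -/
theorem exists_limit (f : ℕ → PowerSeries k)
    (hf : ∀ m n : ℕ, m ≤ n → (X : PowerSeries k) ^ m ∣ f n - f m) :
    ∃ L : PowerSeries k, ∀ n, (X : PowerSeries k) ^ n ∣ L - f n := by
  refine ⟨PowerSeries.mk fun i => PowerSeries.coeff i (f (i + 1)), fun n => ?_⟩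
  rw [PowerSeries.X_pow_dvd_iff]
  intro m hm
  rw [map_sub, coeff_mk]
  rcases le_or_gt (m + 1) n with h | h
  · have h1 := hf (m + 1) n h
    rw [PowerSeries.X_pow_dvd_iff] at h1
    have h2 := h1 m (Nat.lt_succ_self m)
    rw [map_sub, sub_eq_zero] at h2
    rw [h2, sub_self]
  · have hn : n = m + 1 := by omega
    rw [hn, sub_self]

theorem hausdorff_A (a : PowerSeries k) (h : ∀ m : ℕ, (X : PowerSeries k) ^ m ∣ a) :
    a = 0 := by
  ext i
  have h2 := h (i + 1)
  rw [PowerSeries.X_pow_dvd_iff] at h2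
  simpa using h2 i (Nat.lt_succ_self i)

variable {B : Type} [CommRing B] [IsDomain B] [Algebra (PowerSeries k) B]
  [Module.Finite (PowerSeries k) B]

theorem hensel_general (hinj : Function.Injective (algebraMap (PowerSeries k) B))
    (b1 : B) (n : ℕ) (hn : 0 < n) :
    ∃ a : B, a ^ n = 1 + algebraMap (PowerSeries k) B X * b1 := by
  haveI : NoZeroSMulDivisors (PowerSeries k) B := by
    refine ⟨fun {a r} h => ?_⟩
    rw [Algebra.smul_def] at h
    rcases mul_eq_zero.mp h with h3 | h3
    · exact Or.inl (hinj (by simpa using h3))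
    · exact Or.inr h3
  haveI : Module.Free (PowerSeries k) B := Module.free_of_finite_type_torsion_free'
  set ι := Module.Free.ChooseBasisIndex (PowerSeries k) B with hι
  set b : Module.Basis ι (PowerSeries k) B := Module.Free.chooseBasis (PowerSeries k) B with hb
  set tR : B := algebraMap (PowerSeries k) B X with htR
  have key : ∀ (r : B) (m : ℕ),
      r ∈ Ideal.span {tR ^ m} ↔ ∀ i, (X : PowerSeries k) ^ m ∣ b.repr r i := by
    intro r m
    constructor
    · intro hr
      obtain ⟨s, hs⟩ := Ideal.mem_span_singleton.mp hr
      intro i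
      have h4 : r = (X : PowerSeries k) ^ m • s := by
        rw [hs, Algebra.smul_def, map_pow]
      rw [h4, map_smul]
      exact ⟨b.repr s i, rfl⟩
    · intro h
      choose c hc using h
      rw [Ideal.mem_span_singleton]
      refine ⟨∑ i, c i • b i, ?_⟩
      calc r = ∑ i, b.repr r i • b i := (b.sum_repr r).symm
        _ = ∑ i, tR ^ m * (c i • b i) := by
            refine Finset.sum_congr rfl fun i _ => ?_
            rw [hc i, mul_smul, Algebra.smul_def, map_pow]
        _ = tR ^ m * ∑ i, c i • b i := by rw [Finset.mul_sum]
  have hsm : ∀ m : ℕ,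
      ((Ideal.span {tR} : Ideal B) ^ m • (⊤ : Submodule B B)) = Ideal.span {tR ^ m} := by
    intro m
    rw [smul_eq_mul, Ideal.mul_top, Ideal.span_singleton_pow]
  haveI hHaus : IsHausdorff (Ideal.span {tR}) B := by
    constructor
    intro x hx
    have hco : ∀ i, b.repr x i = 0 := by
      intro i
      apply hausdorff_A
      intro m
      have h5 := hx m
      rw [SModEq.zero, hsm m] at h5
      exact (key x m).mp h5 i
    have h6 : b.repr x = 0 := Finsupp.ext hco
    exact b.repr.map_eq_zero_iff.mp h6
  haveI hPrec : IsPrecomplete (Ideal.span {tR}) B := by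
    constructor
    intro f hf
    have hcau : ∀ i, ∀ m n' : ℕ, m ≤ n' →
        (X : PowerSeries k) ^ m ∣ b.repr (f n') i - b.repr (f m) i := by
      intro i m n' hmn
      have h5 := SModEq.sub_mem.mp (hf hmn)
      rw [hsm m] at h5
      have h6 := (key _ m).mp (neg_mem h5) i
      rw [neg_sub] at h6
      simpa [map_sub] using h6
    choose g hg using fun i => exists_limit (fun n' => b.repr (f n') i) (hcau i)
    refine ⟨∑ i, g i • b i, fun m => ?_⟩
    rw [SModEq.sub_mem, hsm m]
    refine (key _ m).mpr fun i => ?_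
    have h7 : b.repr (∑ j, g j • b j) i = g i := by
      rw [b.repr_sum_self]
    rw [map_sub, Finsupp.sub_apply, h7]
    have h8 := hg i m
    rw [← neg_sub]
    exact dvd_neg.mpr h8
  haveI : IsAdicComplete (Ideal.span {tR}) B := ⟨⟩
  haveI hhr : HenselianRing B (Ideal.span {tR}) := inferInstance
  set z : B := 1 + tR * b1 with hz
  have h1 : (Polynomial.X ^ n - Polynomial.C z).eval 1 ∈ Ideal.span {tR} := by
    have he : (Polynomial.X ^ n - Polynomial.C z).eval 1 = tR * (-b1) := by
      simp [hz]
    rw [he, Ideal.mem_span_singleton]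
    exact Dvd.intro _ rfl
  have hu : IsUnit ((n : B)) := by
    have hk : IsUnit ((n : k)) := isUnit_iff_ne_zero.mpr (Nat.cast_ne_zero.mpr hn.ne')
    have hA : IsUnit ((n : PowerSeries k)) := by
      rw [← map_natCast (algebraMap k (PowerSeries k))]
      exact hk.map _
    rw [← map_natCast (algebraMap (PowerSeries k) B)]
    exact hA.map _
  have h2 : IsUnit (Ideal.Quotient.mk (Ideal.span {tR})
      ((Polynomial.X ^ n - Polynomial.C z).derivative.eval 1)) := by
    have hd : (Polynomial.X ^ n - Polynomial.C z).derivative.eval 1 = (n : B) := by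
      simp [Polynomial.derivative_X_pow]
    rw [hd]
    exact hu.map _
  obtain ⟨a, ha, -⟩ := hhr.is_henselian (Polynomial.X ^ n - Polynomial.C z)
    (Polynomial.monic_X_pow_sub_C z hn.ne') 1 h1 h2
  refine ⟨a, ?_⟩
  have h9 : a ^ n - z = 0 := by
    simpa [Polynomial.IsRoot] using ha
  rw [hz] at h9
  rw [sub_eq_zero] at h9
  rw [h9, htR]

end General

section Omega

variable (k : Type) [Field k] [CharZero k]

local notation "KK" => LaurentSeries k
local notation "Om" => AlgebraicClosure (LaurentSeries k)

theorem AtoK_eq : (algebraMap (PowerSeries k) KK) = (HahnSeries.ofPowerSeries ℤ k) := rfl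

theorem AtoOm_inj : Function.Injective (algebraMap (PowerSeries k) Om) := by
  rw [IsScalarTower.algebraMap_eq (PowerSeries k) KK Om]
  exact (algebraMap KK Om).injective.comp (AtoK_eq k ▸ HahnSeries.ofPowerSeries_injective)

theorem root_in_adjoin (y : Om) (hy : IsIntegral (PowerSeries k) y) (n : ℕ) (hn : 0 < n) :
    ∃ a ∈ Algebra.adjoin (PowerSeries k) ({y} : Set Om),
      a ^ n = 1 + algebraMap (PowerSeries k) Om X * y := by
  set R := Algebra.adjoin (PowerSeries k) ({y} : Set Om) with hR
  haveI : Module.Finite (PowerSeries k) ↥R :=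
    ⟨(Submodule.fg_top _).mpr hy.fg_adjoin_singleton⟩
  have hinj : Function.Injective (algebraMap (PowerSeries k) ↥R) := by
    intro a a' h
    apply AtoOm_inj k
    have h2 := congrArg (Subalgebra.val R) h
    simpa using h2
  obtain ⟨a, han⟩ := hensel_general hinj
    (⟨y, Algebra.self_mem_adjoin_singleton _ y⟩ : ↥R) n hn
  refine ⟨(a : Om), a.2, ?_⟩
  have h3 := congrArg (Subalgebra.val R) han
  simpa using h3

theorem mem_gen (E : IntermediateField KK Om) (hE : FiniteDimensional KK E)
    (y : Om) (hy : IsIntegral (PowerSeries k) y) (hyE : y ∈ E)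
    (hne : 1 + algebraMap (PowerSeries k) Om X * y ≠ 0) :
    1 + algebraMap (PowerSeries k) Om X * y ∈ {x : Om |
      ∃ E' : IntermediateField KK Om, FiniteDimensional KK ↥E' ∧
        x ∈ E' ∧ x ≠ 0 ∧ ∀ n : ℕ, 0 < n → ∃ w ∈ E', w ^ n = x} := by
  have h1 : algebraMap (PowerSeries k) Om X ∈ E := by
    rw [IsScalarTower.algebraMap_apply (PowerSeries k) KK Om]
    exact E.algebraMap_mem _
  refine ⟨E, hE, E.add_mem E.one_mem (E.mul_mem h1 hyE), hne, fun n hn => ?_⟩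
  obtain ⟨a, haR, han⟩ := root_in_adjoin k y hy n hn
  refine ⟨a, ?_, han⟩
  have hle : Algebra.adjoin (PowerSeries k) ({y} : Set Om) ≤
      (E.toSubalgebra.restrictScalars (PowerSeries k)) := by
    apply Algebra.adjoin_le
    intro z hz
    rw [Set.mem_singleton_iff] at hz
    subst hz
    exact hyE
  exact hle haR

theorem main_mem (x : Om) : x ∈ Subfield.closure {x : Om |
    ∃ E : IntermediateField KK Om, FiniteDimensional KK ↥E ∧
      x ∈ E ∧ x ≠ 0 ∧ ∀ n : ℕ, 0 < n → ∃ y ∈ E, y ^ n = x} := by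
  set S : Set Om := {x : Om |
    ∃ E : IntermediateField KK Om, FiniteDimensional KK ↥E ∧
      x ∈ E ∧ x ≠ 0 ∧ ∀ n : ℕ, 0 < n → ∃ y ∈ E, y ^ n = x} with hS
  set F := Subfield.closure S with hF
  rcases eq_or_ne x 0 with rfl | hx0
  · exact F.zero_mem
  set tOm : Om := algebraMap (PowerSeries k) Om X with htOm
  have htOm0 : tOm ≠ 0 := by
    intro h
    exact PowerSeries.X_ne_zero (AtoOm_inj k (by simpa using h))
  -- integral multiple
  have hxalg : IsAlgebraic KK x := Algebra.IsAlgebraic.isAlgebraic x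
  have hxA : IsAlgebraic (PowerSeries k) x :=
    (IsFractionRing.isAlgebraic_iff (PowerSeries k) KK Om).mpr hxalg
  obtain ⟨c, hc0, hcint⟩ := hxA.exists_integral_multiple
  obtain ⟨w, hcx⟩ : ∃ w : integralClosure (PowerSeries k) Om,
      algebraMap (PowerSeries k) Om c * x = w := ⟨⟨c • x, hcint⟩, (Algebra.smul_def _ _).symm⟩
  obtain ⟨v, u, hcu⟩ := IsDiscreteValuationRing.eq_unit_mul_pow_irreducible hc0
    PowerSeries.X_irreducible
  set w' : Om := tOm ^ v * x with hw'
  have hw'int : IsIntegral (PowerSeries k) w' := by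
    have h2 : w' = algebraMap (PowerSeries k) Om ((u⁻¹ : (PowerSeries k)ˣ) : PowerSeries k)
        * (algebraMap (PowerSeries k) Om c * x) := by
      rw [hw', ← mul_assoc, ← map_mul, htOm, ← map_pow]
      congr 2
      rw [hcu, ← mul_assoc, Units.inv_mul, one_mul]
    rw [h2, hcx]
    exact (isIntegral_algebraMap).mul w.2
  -- the finite extension
  set E : IntermediateField KK Om := IntermediateField.adjoin KK {x} with hE
  haveI hEfin : FiniteDimensional KK E :=
    IntermediateField.adjoin.finiteDimensional hxalg.isIntegral
  have hxE : x ∈ E := IntermediateField.mem_adjoin_simple_self KK x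
  have htOmE : tOm ∈ E := by
    rw [htOm, IsScalarTower.algebraMap_apply (PowerSeries k) KK Om]
    exact E.algebraMap_mem _
  have hw'E : w' ∈ E := mul_mem (pow_mem htOmE v) hxE
  -- nonvanishing of 1 + t * w'
  have hne1 : 1 + tOm * w' ≠ 0 := by
    intro h
    have h4 : tOm * w' = -1 := by linear_combination h
    have h3' : w' = -tOm⁻¹ := by
      apply mul_left_cancel₀ htOm0
      rw [h4, mul_neg, mul_inv_cancel₀ htOm0]
    have h3 : w' = algebraMap KK Om (-(algebraMap (PowerSeries k) KK PowerSeries.X)⁻¹) := by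
      rw [h3', map_neg, map_inv₀, ← IsScalarTower.algebraMap_apply (PowerSeries k) KK Om, ← htOm]
    have h5 : IsIntegral (PowerSeries k) (-(algebraMap (PowerSeries k) KK PowerSeries.X)⁻¹) := by
      have := hw'int
      rw [h3] at this
      exact (isIntegral_algebraMap_iff (algebraMap KK Om).injective).mp this
    obtain ⟨a, ha⟩ := IsIntegrallyClosed.isIntegral_iff.mp h5
    have htK0 : algebraMap (PowerSeries k) KK PowerSeries.X ≠ 0 := by
      intro h6
      exact PowerSeries.X_ne_zero ((AtoK_eq k ▸ HahnSeries.ofPowerSeries_injective)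
        (by simpa [AtoK_eq] using h6))
    have h7 : algebraMap (PowerSeries k) KK (PowerSeries.X * a) =
        algebraMap (PowerSeries k) KK (-1) := by
      rw [map_mul, ha, map_neg, map_one]
      have hinv : (algebraMap (PowerSeries k) KK) PowerSeries.X *
          ((algebraMap (PowerSeries k) KK) PowerSeries.X)⁻¹ = 1 := mul_inv_cancel₀ htK0
      linear_combination -hinv
    have h8 : (X : PowerSeries k) * a = -1 :=
      (AtoK_eq k ▸ HahnSeries.ofPowerSeries_injective) (by simpa [AtoK_eq] using h7)
    have h9 := congrArg (PowerSeries.constantCoeff) h8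
    simp at h9
  have hne2 : 1 + tOm * 1 ≠ 0 := by
    rw [mul_one]
    intro h
    have h3 : tOm = -1 := by linear_combination h
    have h4 : (X : PowerSeries k) = -1 := by
      apply AtoOm_inj k
      rw [map_neg, map_one, ← htOm, h3]
    have h9 := congrArg (PowerSeries.constantCoeff) h4
    simp at h9
  -- the two divisible generators
  have hd1 : (1 + tOm * w') ∈ F :=
    Subfield.subset_closure (mem_gen k E hEfin w' hw'int hw'E hne1)
  have hd2 : (1 + tOm * 1) ∈ F := by
    refine Subfield.subset_closure (mem_gen k ⊥ inferInstance 1 isIntegral_one ?_ hne2)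
    exact one_mem ⊥
  -- assemble
  have harith : ((1 + tOm * w') - 1) * (((1 + tOm * 1) - 1)⁻¹) ^ (v + 1) = x := by
    have h10 : (1 + tOm * 1) - 1 = tOm := by ring
    rw [h10, hw']
    field_simp
    rw [show (1 + tOm * tOm ^ v * x - 1) * (1 / tOm) ^ (v + 1) = (tOm * tOm⁻¹) * (tOm * tOm⁻¹) ^ v * x by ring,
      mul_inv_cancel₀ htOm0, one_pow, one_mul, one_mul]
  rw [← harith]
  exact F.mul_mem (F.sub_mem hd1 F.one_mem)
    (F.pow_mem (F.inv_mem (F.sub_mem hd2 F.one_mem)) _)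

end Omega

end Stmt17Aux

set_option maxHeartbeats 1000000 in
set_option synthInstance.maxHeartbeats 100000 in
/-- Let `K = k((t))` be a complete discrete valuation field with
residue field `k` of characteristic `0` (formalized as the Laurent series field), and
let `Ω` be an algebraic closure of `K`.  Let `K_div` be the subfield of `Ω` generated by
the divisible elements of the multiplicative groups of all finite extensions of `K`.
Then (a) every root `t_n` of `t` (with `t_n^n = t`, `n ≥ 1`) lies in `K_div`, (b) every
element of the algebraic closure of `k` inside `Ω` lies in `K_div`; consequently `K_div`
contains the subfield generated by these elements (i.e. `k̄(t^{1/∞}) ∩ Ω`-style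
elements), and `K̄/K_div` is finite, i.e. `K` is not TKND. -/
theorem stmt17 (k : Type) [Field k] [CharZero k] :
    letI K := LaurentSeries k
    letI Ω := AlgebraicClosure K
    letI t : K := HahnSeries.single (1 : ℤ) (1 : k)
    letI algk : Set Ω := {α : Ω | ∃ q : Polynomial k, q ≠ 0 ∧
      (q.map ((algebraMap K Ω).comp HahnSeries.C)).eval α = 0}
    letI rootst : Set Ω := {x : Ω | ∃ n : ℕ, 0 < n ∧ x ^ n = algebraMap K Ω t}
    letI Kdiv : Subfield Ω := Subfield.closure {x : Ω |
      ∃ E : IntermediateField K Ω, FiniteDimensional K ↥E ∧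
        x ∈ E ∧ x ≠ 0 ∧ ∀ n : ℕ, 0 < n → ∃ y ∈ E, y ^ n = x}
    (∀ x ∈ rootst, x ∈ Kdiv) ∧
    (∀ α ∈ algk, α ∈ Kdiv) ∧
    Subfield.closure (algk ∪ rootst) ≤ Kdiv ∧
    FiniteDimensional ↥Kdiv Ω := by
  have hmem : ∀ x : AlgebraicClosure (LaurentSeries k),
      x ∈ Subfield.closure {x : AlgebraicClosure (LaurentSeries k) |
        ∃ E : IntermediateField (LaurentSeries k) (AlgebraicClosure (LaurentSeries k)),
          FiniteDimensional (LaurentSeries k) ↥E ∧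
            x ∈ E ∧ x ≠ 0 ∧ ∀ n : ℕ, 0 < n → ∃ y ∈ E, y ^ n = x} :=
    Stmt17Aux.main_mem k
  refine ⟨fun x _ => hmem x, fun α _ => hmem α, fun x _ => hmem x, ?_⟩
  exact Module.Finite.of_surjective
    (Algebra.linearMap _ (AlgebraicClosure (LaurentSeries k)))
    (fun x => ⟨⟨x, hmem x⟩, rfl⟩)
end
end
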